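/- arXiv:1907.01157 — 9 statements merged into one kernel-verified Lean document; each statement's English description precedes it below -/
import Mathlib

section
/- The map 𝓜 is equal to each of the following four maps: (I − a⁻¹qψ)⁻¹K, K(I − a⁻¹q⁻¹ψ)⁻¹, (I − aqψ)⁻¹B, and B(I − aq⁻¹ψ)⁻¹. -/
/-!
With `u = 1 - a⁻¹qψ` and `w = 1 - aqψ` one has `a • u - a⁻¹ • w = (a - a⁻¹) • 1`, so writing
`K = u u⁻¹ K` turns `aK - a⁻¹B` into `(a - a⁻¹) u⁻¹ K`. The relation `Kψ = q²ψK` moves `K` past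
`(1 - xψ)⁻¹` at the cost of replacing `x` by `q²x`, and all the `1 - xψ` commute; together these
give the remaining three expressions for `𝓜`.
-/

theorem Ring.mul_inverse_eq_inverse_mul_of_semiconjBy {M₀ : Type*} [MonoidWithZero M₀]
    {k u v : M₀} (hu : IsUnit u) (hv : IsUnit v) (h : SemiconjBy k u v) :
    k * Ring.inverse u = Ring.inverse v * k :=
  calc k * Ring.inverse u = Ring.inverse v * (v * k) * Ring.inverse u := by
        rw [Ring.inverse_mul_cancel_left _ _ hv]
    _ = Ring.inverse v * k := by
        rw [← h.eq, mul_assoc, Ring.mul_inverse_cancel_right _ _ hu]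

theorem sub_inv_ne_zero_of_sq_ne_one {𝕂 : Type*} [Field 𝕂] {a : 𝕂} (ha : a ≠ 0)
    (ha1 : a ^ 2 ≠ 1) : a - a⁻¹ ≠ 0 := by
  rw [sub_ne_zero]
  intro h
  apply ha1
  rw [sq]
  nth_rewrite 2 [h]
  exact mul_inv_cancel₀ ha

section OneSubSmul

variable {𝕂 R : Type*} [Field 𝕂] [Ring R] [Algebra 𝕂 R]

theorem commute_one_sub_smul_one_sub_smul (ψ : R) (x y : 𝕂) :
    Commute (1 - x • ψ) (1 - y • ψ) :=
  (Commute.one_left _).sub_left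
    ((Commute.one_right _).sub_right (((Commute.refl ψ).smul_right y).smul_left x))

theorem semiconjBy_one_sub_smul {K ψ : R} {c : 𝕂} (h : K * ψ = c • (ψ * K)) (x : 𝕂) :
    SemiconjBy K (1 - x • ψ) (1 - (c * x) • ψ) := by
  simp only [SemiconjBy, mul_sub, sub_mul, mul_one, one_mul, mul_smul_comm, smul_mul_assoc, h,
    smul_smul, mul_comm c x]

theorem mul_inverse_one_sub_smul {K ψ : R} {c : 𝕂} (h : K * ψ = c • (ψ * K))
    (hinv : ∀ x : 𝕂, IsUnit (1 - x • ψ)) (x : 𝕂) :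
    K * Ring.inverse (1 - x • ψ) = Ring.inverse (1 - (c * x) • ψ) * K :=
  Ring.mul_inverse_eq_inverse_mul_of_semiconjBy (hinv _) (hinv _) (semiconjBy_one_sub_smul h x)

theorem smul_one_sub_smul_sub_inv_smul_one_sub_smul {a : 𝕂} (ha : a ≠ 0) (q : 𝕂) (ψ : R) :
    a • (1 - (a⁻¹ * q) • ψ) - a⁻¹ • (1 - (a * q) • ψ) = (a - a⁻¹) • (1 : R) := by
  rw [smul_sub, smul_sub, smul_smul, smul_smul, mul_inv_cancel_left₀ ha,
    inv_mul_cancel_left₀ ha, sub_smul]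
  abel

variable {K ψ : R} {a q : 𝕂}

theorem smul_sub_inv_smul_mul_inverse_one_sub_smul (ha : a ≠ 0) (ha1 : a - a⁻¹ ≠ 0)
    (hinv : ∀ x : 𝕂, IsUnit (1 - x • ψ)) :
    (a - a⁻¹)⁻¹ • (a • K - a⁻¹ • ((1 - (a * q) • ψ) * Ring.inverse (1 - (a⁻¹ * q) • ψ) * K)) =
      Ring.inverse (1 - (a⁻¹ * q) • ψ) * K := by
  set P := Ring.inverse (1 - (a⁻¹ * q) • ψ)
  have hK : K = (1 - (a⁻¹ * q) • ψ) * P * K := by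
    rw [Ring.mul_inverse_cancel _ (hinv _), one_mul]
  calc (a - a⁻¹)⁻¹ • (a • K - a⁻¹ • ((1 - (a * q) • ψ) * P * K))
      = (a - a⁻¹)⁻¹ • ((a • (1 - (a⁻¹ * q) • ψ) - a⁻¹ • (1 - (a * q) • ψ)) * (P * K)) := by
        rw [sub_mul (a • _), smul_mul_assoc, smul_mul_assoc, ← mul_assoc, ← mul_assoc, ← hK]
    _ = P * K := by
        rw [smul_one_sub_smul_sub_inv_smul_one_sub_smul ha, smul_mul_assoc, one_mul, smul_smul,
          inv_mul_cancel₀ ha1, one_smul]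

theorem one_sub_smul_mul_inverse_mul_mul_inverse (hq : q ≠ 0) (hKψ : K * ψ = q ^ 2 • (ψ * K))
    (hinv : ∀ x : 𝕂, IsUnit (1 - x • ψ)) :
    (1 - (a * q) • ψ) * Ring.inverse (1 - (a⁻¹ * q) • ψ) * K * Ring.inverse (1 - (a * q⁻¹) • ψ) =
      Ring.inverse (1 - (a⁻¹ * q) • ψ) * K := by
  have hc : q ^ 2 * (a * q⁻¹) = a * q := by field_simp
  rw [mul_assoc, mul_inverse_one_sub_smul hKψ hinv, hc, ← mul_assoc, mul_assoc (1 - (a * q) • ψ),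
    (commute_one_sub_smul_one_sub_smul ψ _ _).ringInverse_ringInverse.eq,
    Ring.mul_inverse_cancel_left _ _ (hinv _)]

end OneSubSmul

theorem stmt_0_general
    {𝕂 : Type*} [Field 𝕂] {V : Type*} [AddCommGroup V] [Module 𝕂 V]
    (d : ℕ) (hd : 1 ≤ d) (q a : 𝕂) (hq : q ≠ 0) (ha : a ≠ 0)
    (ha2 : ∀ i : ℤ, 1 - (d : ℤ) ≤ i → i ≤ (d : ℤ) - 1 → a ^ 2 ≠ q ^ (2 * i))
    (K : Module.End 𝕂 V)
    (ψ : Module.End 𝕂 V)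
    (hKψ : K * ψ = q ^ 2 • (ψ * K))
    (hinv : ∀ x : 𝕂, IsUnit (1 - x • ψ))
    (B : Module.End 𝕂 V)
    (hB : B = (1 - (a * q) • ψ) * Ring.inverse (1 - (a⁻¹ * q) • ψ) * K)
    (M : Module.End 𝕂 V)
    (hM : M = (a - a⁻¹)⁻¹ • (a • K - a⁻¹ • B)):
    M = Ring.inverse (1 - (a⁻¹ * q) • ψ) * K ∧
    M = K * Ring.inverse (1 - (a⁻¹ * q⁻¹) • ψ) ∧
    M = Ring.inverse (1 - (a * q) • ψ) * B ∧
    M = B * Ring.inverse (1 - (a * q⁻¹) • ψ) := by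
  have ha1 : a - a⁻¹ ≠ 0 :=
    sub_inv_ne_zero_of_sq_ne_one ha (by simpa using ha2 0 (by omega) (by omega))
  have hM1 : M = Ring.inverse (1 - (a⁻¹ * q) • ψ) * K := by
    rw [hM, hB, smul_sub_inv_smul_mul_inverse_one_sub_smul ha ha1 hinv]
  refine ⟨hM1, ?_, ?_, ?_⟩
  · have hc : q ^ 2 * (a⁻¹ * q⁻¹) = a⁻¹ * q := by field_simp
    rw [hM1, mul_inverse_one_sub_smul hKψ hinv, hc]
  · rw [hM1, hB, mul_assoc, Ring.inverse_mul_cancel_left _ _ (hinv _)]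
  · rw [hM1, hB, one_sub_smul_mul_inverse_mul_mul_inverse hq hKψ hinv]

theorem stmt_0
    {𝕂 : Type*} [Field 𝕂] {V : Type*} [AddCommGroup V] [Module 𝕂 V]
    [FiniteDimensional 𝕂 V]
    (d : ℕ) (hd : 1 ≤ d) (q a : 𝕂) (hq : q ≠ 0) (ha : a ≠ 0)
    (hq2 : ∀ i : ℕ, 1 ≤ i → i ≤ d → q ^ (2 * i) ≠ 1)
    (ha2 : ∀ i : ℤ, 1 - (d : ℤ) ≤ i → i ≤ (d : ℤ) - 1 → a ^ 2 ≠ q ^ (2 * i))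
    (K : Module.End 𝕂 V) (hK : IsUnit K)
    (U : ℕ → Submodule 𝕂 V)
    (hUne : ∀ i, i ≤ d → U i ≠ ⊥)
    (hUint : DirectSum.IsInternal (fun i : Fin (d + 1) => U i.1))
    (hKU : ∀ i, i ≤ d → ∀ v ∈ U i, K v = (q ^ ((d : ℤ) - 2 * (i : ℤ))) • v)
    (ψ : Module.End 𝕂 V)
    (hψ0 : ∀ v ∈ U 0, ψ v = 0)
    (hψU : ∀ i, 1 ≤ i → i ≤ d → ∀ v ∈ U i, ψ v ∈ U (i - 1))
    (hψnil : ψ ^ (d + 1) = 0)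
    (hKψ : K * ψ = q ^ 2 • (ψ * K))
    (hinv : ∀ x : 𝕂, IsUnit (1 - x • ψ))
    (B : Module.End 𝕂 V)
    (hB : B = (1 - (a * q) • ψ) * Ring.inverse (1 - (a⁻¹ * q) • ψ) * K)
    (M : Module.End 𝕂 V)
    (hM : M = (a - a⁻¹)⁻¹ • (a • K - a⁻¹ • B))
    (hMunit : IsUnit M):
    M = Ring.inverse (1 - (a⁻¹ * q) • ψ) * K ∧
    M = K * Ring.inverse (1 - (a⁻¹ * q⁻¹) • ψ) ∧
    M = Ring.inverse (1 - (a * q) • ψ) * B ∧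
    M = B * Ring.inverse (1 - (a * q⁻¹) • ψ) :=
  stmt_0_general d hd q a hq ha ha2 K ψ hKψ hinv B hB M hM
end

section
/- The map 𝓜 is equal to each of the following four maps: K·(Σ_{n=0}^d a^{−n}q^{−n}ψ^n), (Σ_{n=0}^d a^{−n}q^{n}ψ^n)·K, B·(Σ_{n=0}^d a^{n}q^{−n}ψ^n), and (Σ_{n=0}^d a^{n}q^{n}ψ^n)·B. -/
/-!
Since `ψ` is nilpotent, `(I - xψ)⁻¹` is the truncated geometric series `∑ xⁿψⁿ`, so the four sums
are `(I - xψ)⁻¹` for `x = a⁻¹q⁻¹, a⁻¹q, aq⁻¹, aq`. Writing `K = (I - a⁻¹qψ)(I - a⁻¹qψ)⁻¹K` gives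
`aK - a⁻¹B = (a(I - a⁻¹qψ) - a⁻¹(I - aqψ))(I - a⁻¹qψ)⁻¹K = (a - a⁻¹)(I - a⁻¹qψ)⁻¹K`,
so `𝓜 = (I - a⁻¹qψ)⁻¹K`. The relation `Kψ = q²ψK` moves `K` past `(I - xψ)⁻¹` at the cost of
replacing `x` by `xq²`, and the resolvents `(I - xψ)⁻¹` commute with each other; this yields the
other three expressions.
-/

open Finset
open scoped Ring

theorem Ring.inverse_one_sub_eq_sum_range_pow {R : Type*} [Ring R] {x : R} {m : ℕ}
    (h : x ^ m = 0) : (1 - x)⁻¹ʳ = ∑ i ∈ range m, x ^ i := by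
  have hunit : IsUnit (1 - x) := IsNilpotent.isUnit_one_sub ⟨m, h⟩
  calc (1 - x)⁻¹ʳ = (1 - x)⁻¹ʳ * ((1 - x) * ∑ i ∈ range m, x ^ i) := by
        rw [mul_neg_geom_sum, h, sub_zero, mul_one]
    _ = ∑ i ∈ range m, x ^ i := Ring.inverse_mul_cancel_left _ _ hunit

theorem SemiconjBy.ringInverse {M₀ : Type*} [MonoidWithZero M₀] {a x y : M₀}
    (h : SemiconjBy a x y) (hx : IsUnit x) (hy : IsUnit y) : SemiconjBy a x⁻¹ʳ y⁻¹ʳ := by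
  obtain ⟨u, rfl⟩ := hx
  obtain ⟨v, rfl⟩ := hy
  rw [Ring.inverse_unit, Ring.inverse_unit]
  exact h.units_inv_right

section NilpotentResolvent

variable {𝕂 A : Type*} [Field 𝕂] [Ring A] [Algebra 𝕂 A] {ψ : A}

theorem sum_range_mul_pow_smul_pow_eq_inverse {d : ℕ} (hψ : ψ ^ (d + 1) = 0) (x y : 𝕂) :
    ∑ n ∈ range (d + 1), (x ^ n * y ^ n) • ψ ^ n = (1 - (x * y) • ψ)⁻¹ʳ := by
  rw [Ring.inverse_one_sub_eq_sum_range_pow (by rw [smul_pow, hψ, smul_zero])]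
  simp only [smul_pow, mul_pow]

theorem mul_inverse_one_sub_smul_of_semiconjBy {K : A} {c : 𝕂} (hψ : IsNilpotent ψ)
    (hK : SemiconjBy K ψ (c • ψ)) (x : 𝕂) :
    K * (1 - x • ψ)⁻¹ʳ = (1 - (x * c) • ψ)⁻¹ʳ * K := by
  have h : SemiconjBy K (1 - x • ψ) (1 - (x * c) • ψ) := by
    rw [mul_smul]
    exact (SemiconjBy.one_right K).sub_right (hK.smul_right x)
  exact (h.ringInverse (hψ.smul x).isUnit_one_sub (hψ.smul _).isUnit_one_sub).eq

theorem smul_sub_inv_smul_one_sub_smul_mul_inverse {a : 𝕂} (ha : a ≠ 0) (hψ : IsNilpotent ψ)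
    (q : 𝕂) (K : A) :
    a • K - a⁻¹ • ((1 - (a * q) • ψ) * (1 - (a⁻¹ * q) • ψ)⁻¹ʳ * K) =
      (a - a⁻¹) • ((1 - (a⁻¹ * q) • ψ)⁻¹ʳ * K) := by
  set u := 1 - (a⁻¹ * q) • ψ
  have hK : K = u * (u⁻¹ʳ * K) :=
    (Ring.mul_inverse_cancel_left _ _ (hψ.smul _).isUnit_one_sub).symm
  have hcoeff : a • u - a⁻¹ • (1 - (a * q) • ψ) = (a - a⁻¹) • 1 := by
    simp only [u, smul_sub, smul_smul, sub_smul, ← mul_assoc, mul_inv_cancel₀ ha,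
      inv_mul_cancel₀ ha]
    abel
  calc a • K - a⁻¹ • ((1 - (a * q) • ψ) * u⁻¹ʳ * K)
      = (a • u - a⁻¹ • (1 - (a * q) • ψ)) * (u⁻¹ʳ * K) := by
        rw [sub_mul (a • u), smul_mul_assoc a, smul_mul_assoc a⁻¹, ← hK, mul_assoc]
    _ = (a - a⁻¹) • (u⁻¹ʳ * K) := by rw [hcoeff, smul_mul_assoc, one_mul]

theorem commute_one_sub_smul (x y : 𝕂) : Commute (1 - x • ψ) (1 - y • ψ) :=
  (Commute.one_right _).sub_right
    ((Commute.one_left _).sub_left (((Commute.refl ψ).smul_left x).smul_right y))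

end NilpotentResolvent

theorem stmt_1_general
    {𝕂 : Type*} [Field 𝕂] {V : Type*} [AddCommGroup V] [Module 𝕂 V]
    (d : ℕ) (hd : 1 ≤ d) (q a : 𝕂) (hq : q ≠ 0) (ha : a ≠ 0)
    (ha2 : ∀ i : ℤ, 1 - (d : ℤ) ≤ i → i ≤ (d : ℤ) - 1 → a ^ 2 ≠ q ^ (2 * i))
    (K : Module.End 𝕂 V)
    (ψ : Module.End 𝕂 V)
    (hψnil : ψ ^ (d + 1) = 0)
    (hKψ : K * ψ = q ^ 2 • (ψ * K))
    (B : Module.End 𝕂 V)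
    (hB : B = (1 - (a * q) • ψ) * Ring.inverse (1 - (a⁻¹ * q) • ψ) * K)
    (M : Module.End 𝕂 V)
    (hM : M = (a - a⁻¹)⁻¹ • (a • K - a⁻¹ • B)) :
    M = K * (∑ n ∈ Finset.range (d + 1), (a⁻¹ ^ n * q⁻¹ ^ n) • ψ ^ n) ∧
    M = (∑ n ∈ Finset.range (d + 1), (a⁻¹ ^ n * q ^ n) • ψ ^ n) * K ∧
    M = B * (∑ n ∈ Finset.range (d + 1), (a ^ n * q⁻¹ ^ n) • ψ ^ n) ∧
    M = (∑ n ∈ Finset.range (d + 1), (a ^ n * q ^ n) • ψ ^ n) * B := by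
  have hnil : IsNilpotent ψ := ⟨d + 1, hψnil⟩
  have hunit (x : 𝕂) := (hnil.smul x).isUnit_one_sub
  have hKψ' : SemiconjBy K ψ (q ^ 2 • ψ) := by rw [SemiconjBy, hKψ, smul_mul_assoc]
  have hconj := mul_inverse_one_sub_smul_of_semiconjBy hnil hKψ'
  have haa : a - a⁻¹ ≠ 0 := by
    have ha_sq : a ^ 2 ≠ 1 := by simpa using ha2 0 (by omega) (by omega)
    intro h
    apply ha_sq
    field_simp at h
    linear_combination h
  have hM' : M = (1 - (a⁻¹ * q) • ψ)⁻¹ʳ * K := by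
    rw [hM, hB, smul_sub_inv_smul_one_sub_smul_mul_inverse ha hnil, smul_smul, inv_mul_cancel₀ haa,
      one_smul]
  have hshift (x : 𝕂) : x * q⁻¹ * q ^ 2 = x * q := by field_simp
  simp only [sum_range_mul_pow_smul_pow_eq_inverse hψnil]
  rw [hM']
  refine ⟨?_, rfl, ?_, ?_⟩
  · rw [hconj, hshift]
  · rw [hB, mul_assoc, mul_assoc, hconj, hshift, ← mul_assoc (1 - (a⁻¹ * q) • ψ)⁻¹ʳ,
      ((commute_one_sub_smul _ _).ringInverse_ringInverse).eq, mul_assoc, ← mul_assoc,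
      Ring.mul_inverse_cancel _ (hunit _), one_mul]
  · rw [hB, ← mul_assoc, ← mul_assoc, Ring.inverse_mul_cancel _ (hunit _), one_mul]

theorem stmt_1
    {𝕂 : Type*} [Field 𝕂] {V : Type*} [AddCommGroup V] [Module 𝕂 V]
    [FiniteDimensional 𝕂 V]
    (d : ℕ) (hd : 1 ≤ d) (q a : 𝕂) (hq : q ≠ 0) (ha : a ≠ 0)
    (hq2 : ∀ i : ℕ, 1 ≤ i → i ≤ d → q ^ (2 * i) ≠ 1)
    (ha2 : ∀ i : ℤ, 1 - (d : ℤ) ≤ i → i ≤ (d : ℤ) - 1 → a ^ 2 ≠ q ^ (2 * i))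
    (K : Module.End 𝕂 V) (hK : IsUnit K)
    (U : ℕ → Submodule 𝕂 V)
    (hUne : ∀ i, i ≤ d → U i ≠ ⊥)
    (hUint : DirectSum.IsInternal (fun i : Fin (d + 1) => U i.1))
    (hKU : ∀ i, i ≤ d → ∀ v ∈ U i, K v = (q ^ ((d : ℤ) - 2 * (i : ℤ))) • v)
    (ψ : Module.End 𝕂 V)
    (hψ0 : ∀ v ∈ U 0, ψ v = 0)
    (hψU : ∀ i, 1 ≤ i → i ≤ d → ∀ v ∈ U i, ψ v ∈ U (i - 1))
    (hψnil : ψ ^ (d + 1) = 0)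
    (hKψ : K * ψ = q ^ 2 • (ψ * K))
    (hinv : ∀ x : 𝕂, IsUnit (1 - x • ψ))
    (B : Module.End 𝕂 V)
    (hB : B = (1 - (a * q) • ψ) * Ring.inverse (1 - (a⁻¹ * q) • ψ) * K)
    (M : Module.End 𝕂 V)
    (hM : M = (a - a⁻¹)⁻¹ • (a • K - a⁻¹ • B))
    (hMunit : IsUnit M):
    M = K * (∑ n ∈ Finset.range (d + 1), (a⁻¹ ^ n * q⁻¹ ^ n) • ψ ^ n) ∧
    M = (∑ n ∈ Finset.range (d + 1), (a⁻¹ ^ n * q ^ n) • ψ ^ n) * K ∧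
    M = B * (∑ n ∈ Finset.range (d + 1), (a ^ n * q⁻¹ ^ n) • ψ ^ n) ∧
    M = (∑ n ∈ Finset.range (d + 1), (a ^ n * q ^ n) • ψ ^ n) * B :=
  stmt_1_general d hd q a hq ha ha2 K ψ hψnil hKψ B hB M hM
end

section
/- The maps 𝓜 and ψ satisfy 𝓜ψ = q²ψ𝓜. -/
theorem stmt_2
    {𝕂 : Type*} [Field 𝕂] {V : Type*} [AddCommGroup V] [Module 𝕂 V]
    [FiniteDimensional 𝕂 V]
    (d : ℕ) (hd : 1 ≤ d) (q a : 𝕂) (hq : q ≠ 0) (ha : a ≠ 0)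
    (hq2 : ∀ i : ℕ, 1 ≤ i → i ≤ d → q ^ (2 * i) ≠ 1)
    (ha2 : ∀ i : ℤ, 1 - (d : ℤ) ≤ i → i ≤ (d : ℤ) - 1 → a ^ 2 ≠ q ^ (2 * i))
    (K : Module.End 𝕂 V) (hK : IsUnit K)
    (U : ℕ → Submodule 𝕂 V)
    (hUne : ∀ i, i ≤ d → U i ≠ ⊥)
    (hUint : DirectSum.IsInternal (fun i : Fin (d + 1) => U i.1))
    (hKU : ∀ i, i ≤ d → ∀ v ∈ U i, K v = (q ^ ((d : ℤ) - 2 * (i : ℤ))) • v)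
    (ψ : Module.End 𝕂 V)
    (hψ0 : ∀ v ∈ U 0, ψ v = 0)
    (hψU : ∀ i, 1 ≤ i → i ≤ d → ∀ v ∈ U i, ψ v ∈ U (i - 1))
    (hψnil : ψ ^ (d + 1) = 0)
    (hKψ : K * ψ = q ^ 2 • (ψ * K))
    (hinv : ∀ x : 𝕂, IsUnit (1 - x • ψ))
    (B : Module.End 𝕂 V)
    (hB : B = (1 - (a * q) • ψ) * Ring.inverse (1 - (a⁻¹ * q) • ψ) * K)
    (M : Module.End 𝕂 V)
    (hM : M = (a - a⁻¹)⁻¹ • (a • K - a⁻¹ • B))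
    (hMunit : IsUnit M):
    M * ψ = q ^ 2 • (ψ * M) := by
  have hcomm : ∀ x : 𝕂, ψ * Ring.inverse (1 - x • ψ) = Ring.inverse (1 - x • ψ) * ψ := by
    intro x
    obtain ⟨u, hu⟩ := hinv x
    have h1 : Commute ψ (1 - x • ψ) := by
      exact (Commute.one_right ψ).sub_right ((Commute.refl ψ).smul_right x)
    rw [← hu] at h1 ⊢
    rw [Ring.inverse_unit]
    exact (h1.units_inv_right).eq
  have hψc1 : ψ * (1 - (a * q) • ψ) = (1 - (a * q) • ψ) * ψ :=
    ((Commute.one_right ψ).sub_right ((Commute.refl ψ).smul_right _)).eq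
  have hBψ : B * ψ = q ^ 2 • (ψ * B) := by
    rw [hB]
    calc (1 - (a * q) • ψ) * Ring.inverse (1 - (a⁻¹ * q) • ψ) * K * ψ
        = (1 - (a * q) • ψ) * Ring.inverse (1 - (a⁻¹ * q) • ψ) * (K * ψ) := by
          rw [mul_assoc]
      _ = q ^ 2 • ((1 - (a * q) • ψ) * (Ring.inverse (1 - (a⁻¹ * q) • ψ) * ψ) * K) := by
          rw [hKψ, mul_smul_comm, mul_assoc, mul_assoc, mul_assoc]
      _ = q ^ 2 • (ψ * ((1 - (a * q) • ψ) * Ring.inverse (1 - (a⁻¹ * q) • ψ) * K)) := by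
          rw [← hcomm, ← mul_assoc, ← hψc1]
          noncomm_ring
  rw [hM]
  rw [smul_mul_assoc, sub_mul, smul_mul_assoc, smul_mul_assoc, hKψ, hBψ]
  rw [mul_smul_comm, smul_sub, smul_smul, smul_smul, smul_smul, smul_smul, smul_smul]
  rw [mul_sub, mul_smul_comm, mul_smul_comm, smul_sub, smul_smul, smul_smul]
  ring_nf
end

section
/- Both of the following hold: K·exp_q((a⁻¹/(q − q⁻¹))ψ) = exp_q((a⁻¹/(q − q⁻¹))ψ)·𝓜 and B·exp_q((a/(q − q⁻¹))ψ) = exp_q((a/(q − q⁻¹))ψ)·𝓜. -/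
/-
Write E(c) := exp_q(cψ). From Kψ = q²ψK one gets K E(c) = E(q²c) K, and since ψ is nilpotent the
truncated q-exponential satisfies the q-difference equation E(q²c) (1 - q(q - q⁻¹)c ψ) = E(c),
which is the recursion q^{2n} - 1 = q^n (q - q⁻¹) [n]_q on its coefficients.
With P = 1 - a⁻¹qψ and Q = 1 - aqψ we have aP - a⁻¹Q = (a - a⁻¹)I, hence 𝓜 = P⁻¹K and B = QP⁻¹K.
For c = a⁻¹/(q - q⁻¹) the difference equation reads E(q²c) P = E(c), so
K E(c) = E(q²c) P P⁻¹ K = E(c) 𝓜. For c = a/(q - q⁻¹) it reads E(q²c) Q = E(c), and as P, Q and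
E(q²c) are polynomials in ψ, B E(c) = Q P⁻¹ E(q²c) K = E(q²c) Q P⁻¹ K = E(c) 𝓜.
-/

noncomputable def qNum {𝕂 : Type*} [Field 𝕂] (q : 𝕂) (n : ℕ) : 𝕂 :=
  (q ^ n - q⁻¹ ^ n) / (q - q⁻¹)

noncomputable def qFact {𝕂 : Type*} [Field 𝕂] (q : 𝕂) (n : ℕ) : 𝕂 :=
  ∏ j ∈ Finset.range n, qNum q (j + 1)

noncomputable def qExp {𝕂 : Type*} [Field 𝕂] {V : Type*} [AddCommGroup V] [Module 𝕂 V]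
    (q : 𝕂) (N : ℕ) (T : Module.End 𝕂 V) : Module.End 𝕂 V :=
  ∑ n ∈ Finset.range N, (q ^ (n * (n - 1) / 2) / qFact q n) • T ^ n

noncomputable def qExpInv {𝕂 : Type*} [Field 𝕂] {V : Type*} [AddCommGroup V] [Module 𝕂 V]
    (q : 𝕂) (N : ℕ) (T : Module.End 𝕂 V) : Module.End 𝕂 V :=
  ∑ n ∈ Finset.range N, (q⁻¹ ^ (n * (n - 1) / 2) / qFact q n) • T ^ n

open Finset

section Scalars

variable {𝕂 : Type*} [Field 𝕂]

lemma sub_inv_ne_zero_of_sq_ne_one_s6 {x : 𝕂} (hx : x ≠ 0) (hx2 : x ^ 2 ≠ 1) : x - x⁻¹ ≠ 0 := by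
  rw [sub_ne_zero]
  intro h
  apply hx2
  rw [sq]
  nth_rw 2 [h]
  exact mul_inv_cancel₀ hx

lemma qNum_ne_zero {q : 𝕂} (hq : q ≠ 0) (hq2 : q ^ 2 ≠ 1) {n : ℕ} (hn : q ^ (2 * n) ≠ 1) :
    qNum q n ≠ 0 := by
  refine div_ne_zero ?_ (sub_inv_ne_zero_of_sq_ne_one_s6 hq hq2)
  rw [inv_pow]
  exact sub_inv_ne_zero_of_sq_ne_one_s6 (pow_ne_zero n hq) (by rwa [← pow_mul, mul_comm])

lemma qFact_succ (q : 𝕂) (n : ℕ) : qFact q (n + 1) = qFact q n * qNum q (n + 1) :=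
  prod_range_succ _ _

noncomputable def qExpCoeff (q : 𝕂) (n : ℕ) : 𝕂 :=
  q ^ (n * (n - 1) / 2) / qFact q n

lemma qExpCoeff_zero (q : 𝕂) : qExpCoeff q 0 = 1 := by
  simp [qExpCoeff, qFact]

lemma qExpCoeff_succ_mul {q : 𝕂} (hq : q ≠ 0) {n : ℕ} (hn : qNum q (n + 1) ≠ 0) :
    qExpCoeff q (n + 1) * (q ^ (2 * (n + 1)) - 1) =
      qExpCoeff q n * (q * (q - q⁻¹) * q ^ (2 * n)) := by
  have hμ : q - q⁻¹ ≠ 0 := fun h => hn (by rw [qNum, h, div_zero])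
  have hsq : q ^ (2 * (n + 1)) - 1 = q ^ (n + 1) * (q - q⁻¹) * qNum q (n + 1) := by
    rw [qNum, mul_assoc, mul_div_cancel₀ _ hμ, mul_sub, ← mul_pow, ← mul_pow, mul_inv_cancel₀ hq,
      one_pow, ← sq, ← pow_mul]
  rw [qExpCoeff, qExpCoeff, qFact_succ, Nat.triangle_succ, hsq]
  by_cases hF : qFact q n = 0
  · simp [hF]
  field_simp
  ring

end Scalars

section Exp

variable {𝕂 : Type*} [Field 𝕂] {V : Type*} [AddCommGroup V] [Module 𝕂 V]

lemma qExp_eq_sum (q : 𝕂) (N : ℕ) (T : Module.End 𝕂 V) :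
    qExp q N T = ∑ n ∈ range N, qExpCoeff q n • T ^ n := rfl

lemma qExp_smul (q c : 𝕂) (N : ℕ) (T : Module.End 𝕂 V) :
    qExp q N (c • T) = ∑ n ∈ range N, (qExpCoeff q n * c ^ n) • T ^ n := by
  simp only [qExp_eq_sum, smul_pow, smul_smul]

lemma Commute.qExp_right {S T : Module.End 𝕂 V} (h : Commute S T) (q : 𝕂) (N : ℕ) :
    Commute S (qExp q N T) :=
  Commute.sum_right _ _ _ fun n _ => (h.pow_right n).smul_right _

lemma mul_pow_eq_smul_pow_mul {A : Type*} [Ring A] [Algebra 𝕂 A] {K T : A} {r : 𝕂}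
    (h : K * T = r • (T * K)) (n : ℕ) : K * T ^ n = r ^ n • (T ^ n * K) := by
  induction n with
  | zero => simp
  | succ n ih =>
    rw [pow_succ, ← mul_assoc, ih, smul_mul_assoc, mul_assoc, h, mul_smul_comm, smul_smul,
      ← mul_assoc, pow_succ]

lemma mul_qExp_of_mul_eq_smul_mul {K T : Module.End 𝕂 V} {r : 𝕂} (h : K * T = r • (T * K))
    (q : 𝕂) (N : ℕ) : K * qExp q N T = qExp q N (r • T) * K := by
  rw [qExp_smul, qExp_eq_sum, mul_sum, sum_mul]
  refine sum_congr rfl fun n _ => ?_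
  rw [mul_smul_comm, mul_pow_eq_smul_pow_mul h, smul_smul, smul_mul_assoc]

lemma qExp_sq_smul_mul_sub {q : 𝕂} (hq : q ≠ 0) {N : ℕ} (hN : ∀ n < N, qNum q (n + 1) ≠ 0)
    {T : Module.End 𝕂 V} (hT : T ^ (N + 1) = 0) :
    qExp q (N + 1) (q ^ 2 • T) * (1 - (q * (q - q⁻¹)) • T) = qExp q (N + 1) T := by
  set s := q * (q - q⁻¹)
  have hterm : ∀ n, ((qExpCoeff q n * (q ^ 2) ^ n) • T ^ n) * (1 - s • T) =
      (qExpCoeff q n * q ^ (2 * n)) • T ^ n -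
        (qExpCoeff q n * (s * q ^ (2 * n))) • T ^ (n + 1) := by
    intro n
    rw [mul_sub, mul_one, smul_mul_assoc, mul_smul_comm, smul_smul, ← pow_succ, ← pow_mul,
      mul_assoc, mul_comm _ s]
  rw [qExp_smul, qExp_eq_sum, sum_mul, sum_congr rfl fun n _ => hterm n, sum_sub_distrib,
    sum_range_succ (fun n => (qExpCoeff q n * (s * q ^ (2 * n))) • T ^ (n + 1)) N, hT,
    smul_zero, add_zero, sum_range_succ', sum_range_succ' _ N, add_sub_right_comm,
    ← sum_sub_distrib]
  simp only [qExpCoeff_zero, mul_zero, pow_zero, mul_one]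
  congr 1
  refine sum_congr rfl fun n hn => ?_
  rw [← sub_smul]
  congr 1
  linear_combination qExpCoeff_succ_mul hq (hN n (mem_range.mp hn))

end Exp

lemma Commute.ringInverse_right {M₀ : Type*} [MonoidWithZero M₀] {a b : M₀} (h : Commute a b) :
    Commute a (Ring.inverse b) := by
  by_cases hb : IsUnit b
  · obtain ⟨u, rfl⟩ := hb
    rw [Ring.inverse_unit]
    exact h.units_inv_right
  · rw [Ring.inverse_non_unit _ hb]
    exact Commute.zero_right a

lemma smul_sub_smul_mul_inverse_mul {𝕂 A : Type*} [Field 𝕂] [Ring A] [Algebra 𝕂 A]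
    {a b : 𝕂} (hab : a - b ≠ 0) {P Q : A} (hP : IsUnit P) (hPQ : a • P - b • Q = (a - b) • 1)
    (K : A) : (a - b)⁻¹ • (a • K - b • (Q * Ring.inverse P * K)) = Ring.inverse P * K := by
  have hK : K = P * (Ring.inverse P * K) := by
    rw [← mul_assoc, Ring.mul_inverse_cancel _ hP, one_mul]
  calc (a - b)⁻¹ • (a • K - b • (Q * Ring.inverse P * K))
      = (a - b)⁻¹ • ((a • P - b • Q) * (Ring.inverse P * K)) := by
        rw [sub_mul, smul_mul_assoc, smul_mul_assoc, ← hK, mul_assoc]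
    _ = Ring.inverse P * K := by
        rw [hPQ, smul_mul_assoc, one_mul, smul_smul, inv_mul_cancel₀ hab, one_smul]

theorem stmt_6_general
    {𝕂 : Type*} [Field 𝕂] {V : Type*} [AddCommGroup V] [Module 𝕂 V]
    (d : ℕ) (hd : 1 ≤ d) (q a : 𝕂) (hq : q ≠ 0) (ha : a ≠ 0)
    (hq2 : ∀ i : ℕ, 1 ≤ i → i ≤ d → q ^ (2 * i) ≠ 1)
    (ha2 : ∀ i : ℤ, 1 - (d : ℤ) ≤ i → i ≤ (d : ℤ) - 1 → a ^ 2 ≠ q ^ (2 * i))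
    (K : Module.End 𝕂 V)
    (ψ : Module.End 𝕂 V)
    (hψnil : ψ ^ (d + 1) = 0)
    (hKψ : K * ψ = q ^ 2 • (ψ * K))
    (hinv : ∀ x : 𝕂, IsUnit (1 - x • ψ))
    (B : Module.End 𝕂 V)
    (hB : B = (1 - (a * q) • ψ) * Ring.inverse (1 - (a⁻¹ * q) • ψ) * K)
    (M : Module.End 𝕂 V)
    (hM : M = (a - a⁻¹)⁻¹ • (a • K - a⁻¹ • B)):
    K * qExp q (d + 1) ((a⁻¹ / (q - q⁻¹)) • ψ)
      = qExp q (d + 1) ((a⁻¹ / (q - q⁻¹)) • ψ) * M ∧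
    B * qExp q (d + 1) ((a / (q - q⁻¹)) • ψ)
      = qExp q (d + 1) ((a / (q - q⁻¹)) • ψ) * M := by
  have hq21 : q ^ 2 ≠ 1 := by simpa using hq2 1 le_rfl hd
  have hμ : q - q⁻¹ ≠ 0 := sub_inv_ne_zero_of_sq_ne_one_s6 hq hq21
  have hNum : ∀ n < d, qNum q (n + 1) ≠ 0 := fun n hn =>
    qNum_ne_zero hq hq21 (hq2 (n + 1) n.succ_pos hn)
  have haa : a - a⁻¹ ≠ 0 :=
    sub_inv_ne_zero_of_sq_ne_one_s6 ha (by simpa using ha2 0 (by omega) (by omega))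
  have hKE : ∀ c : 𝕂, K * qExp q (d + 1) (c • ψ) = qExp q (d + 1) (q ^ 2 • c • ψ) * K :=
    fun c => mul_qExp_of_mul_eq_smul_mul
      (by rw [mul_smul_comm, hKψ, smul_mul_assoc, smul_comm]) _ _
  have hdiff : ∀ x : 𝕂, qExp q (d + 1) (q ^ 2 • (x / (q - q⁻¹)) • ψ) * (1 - (x * q) • ψ) =
      qExp q (d + 1) ((x / (q - q⁻¹)) • ψ) := by
    intro x
    convert qExp_sq_smul_mul_sub hq hNum (T := (x / (q - q⁻¹)) • ψ)
      (by rw [smul_pow, hψnil, smul_zero]) using 3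
    rw [smul_smul]
    field_simp
  have hcomm : ∀ x c : 𝕂, Commute (1 - x • ψ) (qExp q (d + 1) (c • ψ)) := fun x c =>
    Commute.qExp_right
      (((Commute.one_left ψ).sub_left ((Commute.refl ψ).smul_left x)).smul_right c) _ _
  have hEP := hdiff a⁻¹
  have hEQ := hdiff a
  set P : Module.End 𝕂 V := 1 - (a⁻¹ * q) • ψ
  set Q : Module.End 𝕂 V := 1 - (a * q) • ψ
  have hP : IsUnit P := hinv _
  have hMP : M = Ring.inverse P * K := by
    rw [hM, hB]
    exact smul_sub_smul_mul_inverse_mul haa hP (by module) K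
  constructor
  · rw [hKE, hMP, ← hEP, mul_assoc, ← mul_assoc P, Ring.mul_inverse_cancel _ hP, one_mul]
  · have hQP : Commute (qExp q (d + 1) (q ^ 2 • (a / (q - q⁻¹)) • ψ)) (Q * Ring.inverse P) := by
      rw [smul_smul]
      exact (hcomm _ _).symm.mul_right (hcomm _ _).symm.ringInverse_right
    rw [hB, hMP, mul_assoc, hKE, ← mul_assoc, ← hQP.eq, ← hEQ]
    simp only [mul_assoc]

theorem stmt_6
    {𝕂 : Type*} [Field 𝕂] {V : Type*} [AddCommGroup V] [Module 𝕂 V]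
    [FiniteDimensional 𝕂 V]
    (d : ℕ) (hd : 1 ≤ d) (q a : 𝕂) (hq : q ≠ 0) (ha : a ≠ 0)
    (hq2 : ∀ i : ℕ, 1 ≤ i → i ≤ d → q ^ (2 * i) ≠ 1)
    (ha2 : ∀ i : ℤ, 1 - (d : ℤ) ≤ i → i ≤ (d : ℤ) - 1 → a ^ 2 ≠ q ^ (2 * i))
    (K : Module.End 𝕂 V) (hK : IsUnit K)
    (U : ℕ → Submodule 𝕂 V)
    (hUne : ∀ i, i ≤ d → U i ≠ ⊥)
    (hUint : DirectSum.IsInternal (fun i : Fin (d + 1) => U i.1))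
    (hKU : ∀ i, i ≤ d → ∀ v ∈ U i, K v = (q ^ ((d : ℤ) - 2 * (i : ℤ))) • v)
    (ψ : Module.End 𝕂 V)
    (hψ0 : ∀ v ∈ U 0, ψ v = 0)
    (hψU : ∀ i, 1 ≤ i → i ≤ d → ∀ v ∈ U i, ψ v ∈ U (i - 1))
    (hψnil : ψ ^ (d + 1) = 0)
    (hKψ : K * ψ = q ^ 2 • (ψ * K))
    (hinv : ∀ x : 𝕂, IsUnit (1 - x • ψ))
    (B : Module.End 𝕂 V)
    (hB : B = (1 - (a * q) • ψ) * Ring.inverse (1 - (a⁻¹ * q) • ψ) * K)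
    (M : Module.End 𝕂 V)
    (hM : M = (a - a⁻¹)⁻¹ • (a • K - a⁻¹ • B))
    (hMunit : IsUnit M):
    K * qExp q (d + 1) ((a⁻¹ / (q - q⁻¹)) • ψ)
      = qExp q (d + 1) ((a⁻¹ / (q - q⁻¹)) • ψ) * M ∧
    B * qExp q (d + 1) ((a / (q - q⁻¹)) • ψ)
      = qExp q (d + 1) ((a / (q - q⁻¹)) • ψ) * M :=
  stmt_6_general d hd q a hq ha hq2 ha2 K ψ hψnil hKψ hinv B hB M hM
end

section
/- Both of the following identities hold: exp_q((a/(q − q⁻¹))ψ)·exp_{q⁻¹}(−(a⁻¹/(q − q⁻¹))ψ) = Σ_{i=0}^d (∏_{j=1}^i (aq^{j−1} − a⁻¹q^{1−j})/(q^j − q^{−j}))ψ^i and exp_q((a⁻¹/(q − q⁻¹))ψ)·exp_{q⁻¹}(−(a/(q − q⁻¹))ψ) = Σ_{i=0}^d (∏_{j=1}^i (a⁻¹q^{j−1} − aq^{1−j})/(q^j − q^{−j}))ψ^i. -/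
section Aux

open Finset

variable {𝕂 : Type*} [Field 𝕂]

noncomputable def Phi (q : 𝕂) (k : ℕ) : 𝕂 := ∏ j ∈ range k, (q ^ (j+1) - q⁻¹ ^ (j+1))

noncomputable def Fc (q b : 𝕂) (k : ℕ) : 𝕂 := q ^ (k*(k-1)/2) * b ^ k / Phi q k
noncomputable def Gc (q b : 𝕂) (l : ℕ) : 𝕂 := (-1)^l * q⁻¹ ^ (l*(l-1)/2) * b⁻¹ ^ l / Phi q l

lemma tri (k : ℕ) : (k+1)*k/2 = k*(k-1)/2 + k := by
  rcases k with _ | m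
  · simp
  · have h1 : (m+2)*(m+1) = (m+1)*m + (m+1)*2 := by ring
    have h2 : (m+1+1)*(m+1)/2 = ((m+1)*m + (m+1)*2)/2 := by rw [← h1]
    rw [h2, Nat.add_mul_div_right _ _ (by norm_num : 0 < 2)]
    simp

lemma Frec (q b : 𝕂) (k : ℕ) :
    Fc q b (k+1) = (q^k * b / (q^(k+1) - q⁻¹^(k+1))) * Fc q b k := by
  unfold Fc Phi
  rw [prod_range_succ, show (k+1)*((k+1)-1)/2 = k*(k-1)/2 + k by simpa using tri k,
    pow_add, pow_succ]
  simp only [div_eq_mul_inv, mul_inv]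
  ring

lemma Grec (q b : 𝕂) (l : ℕ) :
    Gc q b (l+1) = (-(q⁻¹^l * b⁻¹) / (q^(l+1) - q⁻¹^(l+1))) * Gc q b l := by
  unfold Gc Phi
  rw [prod_range_succ, show (l+1)*((l+1)-1)/2 = l*(l-1)/2 + l by simpa using tri l,
    pow_add, pow_succ, pow_succ]
  simp only [div_eq_mul_inv, mul_inv]
  ring

lemma core (q b : 𝕂) (k l : ℕ)
    (hDk : q^(k+1) - q⁻¹^(k+1) ≠ 0) (hDl : q^(l+1) - q⁻¹^(l+1) ≠ 0) :
    (q^(k+l+2) - q⁻¹^(k+l+2)) * (Fc q b (k+1) * Gc q b (l+1))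
      = -(b⁻¹ * q⁻¹^(k+l+1)) * (Fc q b (k+1) * Gc q b l)
        + b * q^(k+l+1) * (Fc q b k * Gc q b (l+1)) := by
  have key : (q^(k+l+2) - q⁻¹^(k+l+2))
      = q⁻¹^(k+1) * (q^(l+1) - q⁻¹^(l+1)) + q^(l+1) * (q^(k+1) - q⁻¹^(k+1)) := by
    ring
  have hk1 : (q^(k+1) - q⁻¹^(k+1))⁻¹ * (q^(k+1) - q⁻¹^(k+1)) = 1 := inv_mul_cancel₀ hDk
  have hl1 : (q^(l+1) - q⁻¹^(l+1))⁻¹ * (q^(l+1) - q⁻¹^(l+1)) = 1 := inv_mul_cancel₀ hDl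
  rw [Frec, Grec, key]
  linear_combination
    (-(q^k * q⁻¹^l * b * b⁻¹ * Fc q b k * Gc q b l * q^(l+1) * (q^(l+1) - q⁻¹^(l+1))⁻¹)) * hk1
    + (-(q^k * q⁻¹^l * b * b⁻¹ * Fc q b k * Gc q b l * q⁻¹^(k+1) * (q^(k+1) - q⁻¹^(k+1))⁻¹)) * hl1

lemma Fc_zero (q b : 𝕂) : Fc q b 0 = 1 := by simp [Fc, Phi]
lemma Gc_zero (q b : 𝕂) : Gc q b 0 = 1 := by simp [Gc, Phi]

lemma keyFG (d : ℕ) (q b : 𝕂)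
    (hΦ : ∀ j : ℕ, 1 ≤ j → j ≤ d → q^j - q⁻¹^j ≠ 0) :
    ∀ i, i ≤ d → ∑ k ∈ range (i+1), Fc q b k * Gc q b (i-k)
      = ∏ j ∈ range i, (b*q^j - b⁻¹*q⁻¹^j)/(q^(j+1) - q⁻¹^(j+1)) := by
  intro i
  induction i with
  | zero => simp [Fc_zero, Gc_zero]
  | succ i ih =>
    intro h
    have hi : i ≤ d := Nat.le_of_succ_le h
    have hD : q^(i+1) - q⁻¹^(i+1) ≠ 0 := hΦ (i+1) (by omega) h
    have hDD : (q^(i+1) - q⁻¹^(i+1)) * (q^(i+1) - q⁻¹^(i+1))⁻¹ = 1 := mul_inv_cancel₀ hD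
    have hstep : (q^(i+1) - q⁻¹^(i+1)) * ∑ k ∈ range (i+2), Fc q b k * Gc q b (i+1-k)
        = (b*q^i - b⁻¹*q⁻¹^i) * ∑ k ∈ range (i+1), Fc q b k * Gc q b (i-k) := by
      rw [Finset.mul_sum]
      have hterm : ∀ k ∈ range (i+2),
          (q^(i+1) - q⁻¹^(i+1)) * (Fc q b k * Gc q b (i+1-k))
            = -(b⁻¹*q⁻¹^i) * (if k ≤ i then Fc q b k * Gc q b (i-k) else 0)
              + b*q^i * (if k = 0 then 0 else Fc q b (k-1) * Gc q b (i+1-k)) := by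
        intro k hk
        rw [mem_range] at hk
        rcases Nat.eq_zero_or_pos k with rfl | hk0
        · simp only [Nat.zero_le, Nat.sub_zero, Fc_zero, one_mul, reduceIte, ite_true,
            mul_zero, add_zero]
          rw [Grec]
          linear_combination (-(q⁻¹^i * b⁻¹ * Gc q b i)) * hDD
        · rcases eq_or_lt_of_le (Nat.lt_succ_iff.mp (by omega : k < i + 2)) with hki | hki
          · -- k = i+1
            subst hki
            simp only [if_neg (by omega : ¬ i+1 ≤ i), if_neg (by omega : i+1 ≠ 0),
              Nat.add_sub_cancel, Nat.sub_self, mul_zero, zero_add, Gc_zero, mul_one]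
            rw [Frec]
            linear_combination (q^i * b * Fc q b i) * hDD
          · -- 1 ≤ k ≤ i
            obtain ⟨k', rfl⟩ : ∃ k', k = k' + 1 := ⟨k - 1, by omega⟩
            set l := i - (k' + 1) with hl
            have e1 : i + 1 - (k' + 1) = l + 1 := by omega
            have e2 : i + 1 = k' + l + 2 := by omega
            have e3 : i = k' + l + 1 := by omega
            rw [if_pos (by omega : k' + 1 ≤ i), if_neg (by omega : k' + 1 ≠ 0),
              Nat.add_sub_cancel, e1, e2, e3]
            exact core q b k' l (hΦ (k'+1) (by omega) (by omega)) (hΦ (l+1) (by omega) (by omega))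
      rw [Finset.sum_congr rfl hterm, Finset.sum_add_distrib, ← Finset.mul_sum, ← Finset.mul_sum]
      have hV : (∑ k ∈ range (i+2), if k ≤ i then Fc q b k * Gc q b (i-k) else 0)
          = ∑ k ∈ range (i+1), Fc q b k * Gc q b (i-k) := by
        rw [Finset.sum_range_succ, if_neg (by omega : ¬ i+1 ≤ i), add_zero]
        exact Finset.sum_congr rfl fun k hk => if_pos (by rw [mem_range] at hk; omega)
      have hW : (∑ k ∈ range (i+2), if k = 0 then (0:𝕂) else Fc q b (k-1) * Gc q b (i+1-k))
          = ∑ k ∈ range (i+1), Fc q b k * Gc q b (i-k) := by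
        rw [Finset.sum_range_succ']
        simp [Nat.succ_sub_succ]
      rw [hV, hW]
      ring
    rw [Finset.prod_range_succ, ← ih hi]
    show ∑ k ∈ range (i+2), Fc q b k * Gc q b (i+1-k) = _
    rw [← mul_div_assoc, eq_div_iff hD]
    linear_combination hstep

variable {V : Type*} [AddCommGroup V] [Module 𝕂 V]

lemma convPow (N : ℕ) (ψ : Module.End 𝕂 V) (hN : ψ ^ N = 0) (f g : ℕ → 𝕂) :
    (∑ n ∈ range N, f n • ψ ^ n) * (∑ m ∈ range N, g m • ψ ^ m)
      = ∑ i ∈ range N, (∑ k ∈ range (i+1), f k * g (i-k)) • ψ ^ i := by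
  have hzero : ∀ n m : ℕ, N ≤ n + m → (f n * g m) • ψ ^ (n + m) = 0 := by
    intro n m hnm
    rw [show n + m = N + (n + m - N) by omega, pow_add, hN, zero_mul, smul_zero]
  rw [Finset.sum_mul_sum]
  have hsummand : ∀ n m : ℕ, (f n • ψ ^ n) * (g m • ψ ^ m) = (f n * g m) • ψ ^ (n + m) := by
    intro n m
    rw [smul_mul_smul_comm, pow_add]
  simp_rw [hsummand]
  rw [← Finset.sum_product']
  rw [← Finset.sum_filter_add_sum_filter_not (range N ×ˢ range N) (fun p => p.1 + p.2 < N)]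
  have h2 : ∑ p ∈ (range N ×ˢ range N).filter (fun p => ¬ p.1 + p.2 < N),
      (f p.1 * g p.2) • ψ ^ (p.1 + p.2) = 0 := by
    apply Finset.sum_eq_zero
    intro p hp
    rw [mem_filter] at hp
    exact hzero p.1 p.2 (by omega)
  rw [h2, add_zero]
  have h3 : ∑ i ∈ range N, (∑ k ∈ range (i+1), f k * g (i-k)) • ψ ^ i
      = ∑ x ∈ (range N).sigma (fun i => range (i+1)), (f x.2 * g (x.1 - x.2)) • ψ ^ x.1 := by
    rw [Finset.sum_sigma]
    exact Finset.sum_congr rfl fun i _ => by rw [Finset.sum_smul]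
  rw [h3]
  apply Finset.sum_nbij' (i := fun p => (⟨p.1 + p.2, p.1⟩ : Σ _ : ℕ, ℕ))
    (j := fun x => (x.2, x.1 - x.2))
  · intro p hp
    simp only [mem_filter, mem_product, mem_range] at hp
    simp only [mem_sigma, mem_range]
    omega
  · intro x hx
    simp only [mem_sigma, mem_range] at hx
    simp only [mem_filter, mem_product, mem_range]
    omega
  · intro p hp
    simp
  · intro x hx
    simp only [mem_sigma, mem_range] at hx
    ext <;> simp <;> omega
  · intro p hp
    simp [Nat.add_sub_cancel_left]

lemma Phi_eq (q : 𝕂) (hε : q - q⁻¹ ≠ 0) (k : ℕ) :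
    Phi q k = qFact q k * (q - q⁻¹)^k := by
  unfold Phi qFact
  calc ∏ j ∈ range k, (q^(j+1) - q⁻¹^(j+1))
      = ∏ j ∈ range k, (qNum q (j+1) * (q - q⁻¹)) :=
        Finset.prod_congr rfl fun j _ => by rw [qNum, div_mul_cancel₀ _ hε]
    _ = (∏ j ∈ range k, qNum q (j+1)) * (q - q⁻¹)^k := by
        rw [Finset.prod_mul_distrib, Finset.prod_const, Finset.card_range]

lemma qExp_eq (q b : 𝕂) (hε : q - q⁻¹ ≠ 0) (N : ℕ) (ψ : Module.End 𝕂 V) :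
    qExp q N ((b / (q - q⁻¹)) • ψ) = ∑ n ∈ Finset.range N, Fc q b n • ψ ^ n := by
  unfold qExp
  refine Finset.sum_congr rfl fun n _ => ?_
  rw [smul_pow, smul_smul]
  congr 1
  rw [Fc, Phi_eq q hε, div_pow, div_mul_div_comm]

lemma qExpInv_eq (q b : 𝕂) (hε : q - q⁻¹ ≠ 0) (N : ℕ) (ψ : Module.End 𝕂 V) :
    qExpInv q N (-((b⁻¹ / (q - q⁻¹)) • ψ)) = ∑ n ∈ Finset.range N, Gc q b n • ψ ^ n := by
  unfold qExpInv
  refine Finset.sum_congr rfl fun n _ => ?_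
  rw [← neg_smul, smul_pow, smul_smul]
  congr 1
  rw [Gc, Phi_eq q hε, neg_pow, div_pow, div_eq_mul_inv, div_eq_mul_inv, div_eq_mul_inv,
    mul_inv]
  ring

end Aux

theorem stmt_8
    {𝕂 : Type*} [Field 𝕂] {V : Type*} [AddCommGroup V] [Module 𝕂 V]
    [FiniteDimensional 𝕂 V]
    (d : ℕ) (hd : 1 ≤ d) (q a : 𝕂) (hq : q ≠ 0) (ha : a ≠ 0)
    (hq2 : ∀ i : ℕ, 1 ≤ i → i ≤ d → q ^ (2 * i) ≠ 1)
    (ψ : Module.End 𝕂 V)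
    (hψnil : ψ ^ (d + 1) = 0):
    qExp q (d + 1) ((a / (q - q⁻¹)) • ψ) * qExpInv q (d + 1) (-((a⁻¹ / (q - q⁻¹)) • ψ))
      = ∑ i ∈ Finset.range (d + 1),
          (∏ j ∈ Finset.range i,
            (a * q ^ j - a⁻¹ * q⁻¹ ^ j) / (q ^ (j + 1) - q⁻¹ ^ (j + 1))) • ψ ^ i ∧
    qExp q (d + 1) ((a⁻¹ / (q - q⁻¹)) • ψ) * qExpInv q (d + 1) (-((a / (q - q⁻¹)) • ψ))
      = ∑ i ∈ Finset.range (d + 1),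
          (∏ j ∈ Finset.range i,
            (a⁻¹ * q ^ j - a * q⁻¹ ^ j) / (q ^ (j + 1) - q⁻¹ ^ (j + 1))) • ψ ^ i := by
  have hΦ : ∀ j : ℕ, 1 ≤ j → j ≤ d → q^j - q⁻¹^j ≠ 0 := by
    intro j h1 h2 h0
    apply hq2 j h1 h2
    have he : q^j = q⁻¹^j := sub_eq_zero.mp h0
    have h2m : q^(2*j) = q^j * q^j := by rw [two_mul, pow_add]
    rw [h2m]
    nth_rewrite 2 [he]
    rw [inv_pow, mul_inv_cancel₀ (pow_ne_zero j hq)]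
  have hε : q - q⁻¹ ≠ 0 := by
    have := hΦ 1 le_rfl hd
    simpa using this
  constructor
  · rw [qExp_eq q a hε, qExpInv_eq q a hε, convPow (d+1) ψ hψnil]
    refine Finset.sum_congr rfl fun i hi => ?_
    rw [Finset.mem_range] at hi
    rw [keyFG d q a hΦ i (by omega)]
  · rw [qExp_eq q a⁻¹ hε,
      show -((a / (q - q⁻¹)) • ψ) = -(((a⁻¹)⁻¹ / (q - q⁻¹)) • ψ) by rw [inv_inv],
      qExpInv_eq q a⁻¹ hε, convPow (d+1) ψ hψnil]
    refine Finset.sum_congr rfl fun i hi => ?_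
    rw [Finset.mem_range] at hi
    rw [keyFG d q a⁻¹ hΦ i (by omega)]
    rw [inv_inv]
end

section
/- The map 𝓜 is diagonalizable, and its eigenvalues are precisely q^d, q^{d−2}, q^{d−4}, …, q^{−d}; that is, V is the direct sum of the eigenspaces W_i := {v ∈ V : 𝓜v = q^{d−2i}v} for 0 ≤ i ≤ d, and each W_i is nonzero. -/
/-!
Write `P = 1 - a⁻¹qψ`. The defining formula collapses to `𝓜 = P⁻¹K`, and the commutation rule
`Kψ = q²ψK` lets one solve `K S = P S K` for a unipotent `S = ∑ cₖ ψᵏ`: comparing coefficients of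
`ψᵏK` gives `(1 - q^{2k}) cₖ = a⁻¹q cₖ₋₁`, solvable since `q^{2k} ≠ 1` for `1 ≤ k ≤ d`. Hence
`𝓜 = S K S⁻¹`, so the eigenspaces of `𝓜` are the images under `S` of those of `K`, namely of the `Uᵢ`.
-/

open Finset Module

section Intertwiner

variable {𝕂 A : Type*} [Field 𝕂] [Ring A] [Algebra 𝕂 A]

theorem inv_sub_inv_smul_eq_inverse_mul {a : 𝕂} (ha : a ≠ 0) (ha2 : a ^ 2 ≠ 1) (q : 𝕂)
    {ψ : A} (hP : IsUnit (1 - (a⁻¹ * q) • ψ)) (K : A) :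
    (a - a⁻¹)⁻¹ • (a • K - a⁻¹ • ((1 - (a * q) • ψ) * Ring.inverse (1 - (a⁻¹ * q) • ψ) * K)) =
      Ring.inverse (1 - (a⁻¹ * q) • ψ) * K := by
  have haa : a - a⁻¹ ≠ 0 := by
    rw [sub_ne_zero]
    intro h
    apply ha2
    rw [sq, ← mul_inv_cancel₀ ha, ← h]
  have hlin : a • (1 - (a⁻¹ * q) • ψ) - a⁻¹ • (1 - (a * q) • ψ) = (a - a⁻¹) • (1 : A) := by
    rw [smul_sub, smul_sub, smul_smul, smul_smul, sub_smul, ← mul_assoc, ← mul_assoc,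
      mul_inv_cancel₀ ha, inv_mul_cancel₀ ha]
    abel
  have hsplit : a • K - a⁻¹ • ((1 - (a * q) • ψ) * Ring.inverse (1 - (a⁻¹ * q) • ψ) * K) =
      (a • (1 - (a⁻¹ * q) • ψ) - a⁻¹ • (1 - (a * q) • ψ)) *
        (Ring.inverse (1 - (a⁻¹ * q) • ψ) * K) := by
    rw [sub_mul (a • _), smul_mul_assoc a, smul_mul_assoc a⁻¹, ← mul_assoc (1 - (a⁻¹ * q) • ψ),
      Ring.mul_inverse_cancel _ hP, one_mul, ← mul_assoc]
  rw [hsplit, hlin, smul_mul_assoc, one_mul, smul_smul, inv_mul_cancel₀ haa, one_smul]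

noncomputable def intertwinerCoeff (x q : 𝕂) : ℕ → 𝕂
  | 0 => 1
  | k + 1 => x * intertwinerCoeff x q k / (1 - q ^ (2 * (k + 1)))

noncomputable def intertwiner (x q : 𝕂) (d : ℕ) (ψ : A) : A :=
  ∑ k ∈ range (d + 1), intertwinerCoeff x q k • ψ ^ k

theorem mul_pow_eq_smul_pow_mul_s9 {q : 𝕂} {K ψ : A} (hKψ : K * ψ = q ^ 2 • (ψ * K)) (k : ℕ) :
    K * ψ ^ k = q ^ (2 * k) • (ψ ^ k * K) := by
  induction k with
  | zero => simp
  | succ n ih =>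
    rw [pow_succ, ← mul_assoc, ih, smul_mul_assoc, mul_assoc, hKψ, mul_smul_comm, smul_smul,
      ← mul_assoc, ← pow_succ, ← pow_add, mul_add, mul_one]

theorem mul_intertwiner {q : 𝕂} {d : ℕ} (hq2 : ∀ i : ℕ, 1 ≤ i → i ≤ d → q ^ (2 * i) ≠ 1)
    (x : 𝕂) {K ψ : A} (hψnil : ψ ^ (d + 1) = 0) (hKψ : K * ψ = q ^ 2 • (ψ * K)) :
    K * intertwiner x q d ψ = (1 - x • ψ) * (intertwiner x q d ψ * K) := by
  set c := intertwinerCoeff x q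
  have hSK : intertwiner x q d ψ * K = ∑ k ∈ range (d + 1), c k • (ψ ^ k * K) := by
    simp only [intertwiner, sum_mul, smul_mul_assoc, c]
  have hKS : K * intertwiner x q d ψ =
      ∑ k ∈ range (d + 1), (q ^ (2 * k) * c k) • (ψ ^ k * K) := by
    simp only [intertwiner, mul_sum, mul_smul_comm, mul_pow_eq_smul_pow_mul_s9 hKψ, smul_smul,
      mul_comm (c _), c]
  have hψSK : x • ψ * (intertwiner x q d ψ * K) =
      ∑ k ∈ range d, ((1 - q ^ (2 * (k + 1))) * c (k + 1)) • (ψ ^ (k + 1) * K) := by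
    have hterm : ∀ k, x • ψ * c k • (ψ ^ k * K) = (x * c k) • (ψ ^ (k + 1) * K) := fun k => by
      rw [smul_mul_assoc, mul_smul_comm, smul_smul, ← mul_assoc, ← pow_succ']
    simp only [hSK, mul_sum, hterm]
    rw [sum_range_succ, hψnil, zero_mul, smul_zero, add_zero]
    refine sum_congr rfl fun k hk => ?_
    have hne : 1 - q ^ (2 * (k + 1)) ≠ 0 :=
      sub_ne_zero.mpr (hq2 (k + 1) le_add_self (mem_range.mp hk)).symm
    congr 1
    simp only [c, intertwinerCoeff]
    field_simp
  rw [sub_mul, one_mul, hψSK, hSK, hKS, sum_range_succ', sum_range_succ' _ d, add_sub_right_comm,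
    ← sum_sub_distrib]
  congr 1
  · exact sum_congr rfl fun k _ => by rw [← sub_smul]; congr 1; ring
  · simp

theorem isUnit_intertwiner (x q : 𝕂) (d : ℕ) {ψ : A} (hψ : IsNilpotent ψ) :
    IsUnit (intertwiner x q d ψ) := by
  have hnil : IsNilpotent (∑ k ∈ range d, intertwinerCoeff x q (k + 1) • ψ ^ (k + 1)) :=
    Commute.isNilpotent_sum (fun k _ => ((hψ.pow_succ k).smul _))
      fun i j _ _ => (((Commute.refl ψ).pow_pow _ _).smul_left _).smul_right _
  rw [intertwiner, sum_range_succ']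
  simpa [intertwinerCoeff] using hnil.isUnit_add_one

end Intertwiner

theorem zpow_sub_two_mul_injective {𝕂 : Type*} [Field 𝕂] {q : 𝕂} (hq : q ≠ 0) {d : ℕ}
    (hq2 : ∀ i : ℕ, 1 ≤ i → i ≤ d → q ^ (2 * i) ≠ 1) :
    Function.Injective fun i : Fin (d + 1) => q ^ ((d : ℤ) - 2 * (i.1 : ℤ)) := by
  intro i j hij
  dsimp only at hij
  wlog hle : i ≤ j generalizing i j
  · exact (this hij.symm (le_of_not_ge hle)).symm
  by_contra hne
  have hlt : (i : ℕ) < j := lt_of_le_of_ne hle (Fin.val_ne_of_ne hne)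
  apply hq2 (j - i) (by omega) (by have := j.is_le; omega)
  have hdiff : q ^ (2 * ((j : ℕ) - i)) =
      q ^ ((d : ℤ) - 2 * (i.1 : ℤ)) / q ^ ((d : ℤ) - 2 * (j.1 : ℤ)) := by
    rw [← zpow_natCast, ← zpow_sub₀ hq]
    push_cast [Nat.cast_sub hlt.le]
    ring_nf
  rw [hdiff, hij, div_self (zpow_ne_zero _ hq)]

section Eigenspaces

variable {R V : Type*} [CommRing R] [AddCommGroup V] [Module R V]

theorem Module.End.eigenspace_eq_of_isInternal [IsDomain R] [IsTorsionFree R V] {ι : Type*}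
    [DecidableEq ι] {U : ι → Submodule R V} (hU : DirectSum.IsInternal U) {μ : ι → R}
    (hμ : Function.Injective μ) {K : End R V} (hKU : ∀ i, ∀ v ∈ U i, K v = μ i • v) (i : ι) :
    K.eigenspace (μ i) = U i := by
  have hle : U ≤ fun i => K.eigenspace (μ i) :=
    fun i v hv => End.mem_eigenspace_iff.mpr (hKU i v hv)
  exact (congrFun (((K.eigenspaces_iSupIndep.comp hμ).le_iff_eq_of_iSup_eq_top
    hU.submodule_iSup_eq_top).mp hle) i).symm

theorem Module.End.eigenspace_eq_map_of_mul_eq (e : V ≃ₗ[R] V) {M K : End R V}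
    (h : M * e.toLinearMap = e.toLinearMap * K) (μ : R) :
    M.eigenspace μ = (K.eigenspace μ).map (e : V →ₗ[R] V) := by
  ext v
  have hK : K (e.symm v) = e.symm (M v) := by
    apply e.injective
    simpa using (LinearMap.congr_fun h (e.symm v)).symm
  rw [Submodule.mem_map_equiv, End.mem_eigenspace_iff, End.mem_eigenspace_iff, hK,
    ← map_smul, e.symm.injective.eq_iff]

theorem DirectSum.IsInternal.map_linearEquiv {ι : Type*} [DecidableEq ι] {U : ι → Submodule R V}
    (hU : DirectSum.IsInternal U) (e : V ≃ₗ[R] V) :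
    DirectSum.IsInternal fun i => (U i).map (e : V →ₗ[R] V) := by
  rw [DirectSum.isInternal_submodule_iff_iSupIndep_and_iSup_eq_top] at hU ⊢
  exact ⟨hU.1.map_orderIso (Submodule.orderIsoMapComap e),
    by rw [← Submodule.map_iSup, hU.2, Submodule.map_top, LinearEquiv.range]⟩

end Eigenspaces

theorem stmt_9_general
    {𝕂 : Type*} [Field 𝕂] {V : Type*} [AddCommGroup V] [Module 𝕂 V]
    (d : ℕ) (hd : 1 ≤ d) (q a : 𝕂) (hq : q ≠ 0) (ha : a ≠ 0)
    (hq2 : ∀ i : ℕ, 1 ≤ i → i ≤ d → q ^ (2 * i) ≠ 1)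
    (ha2 : ∀ i : ℤ, 1 - (d : ℤ) ≤ i → i ≤ (d : ℤ) - 1 → a ^ 2 ≠ q ^ (2 * i))
    (K : Module.End 𝕂 V)
    (U : ℕ → Submodule 𝕂 V)
    (hUne : ∀ i, i ≤ d → U i ≠ ⊥)
    (hUint : DirectSum.IsInternal (fun i : Fin (d + 1) => U i.1))
    (hKU : ∀ i, i ≤ d → ∀ v ∈ U i, K v = (q ^ ((d : ℤ) - 2 * (i : ℤ))) • v)
    (ψ : Module.End 𝕂 V)
    (hψnil : ψ ^ (d + 1) = 0)
    (hKψ : K * ψ = q ^ 2 • (ψ * K))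
    (B : Module.End 𝕂 V)
    (hB : B = (1 - (a * q) • ψ) * Ring.inverse (1 - (a⁻¹ * q) • ψ) * K)
    (M : Module.End 𝕂 V)
    (hM : M = (a - a⁻¹)⁻¹ • (a • K - a⁻¹ • B)) :
    DirectSum.IsInternal (fun i : Fin (d + 1) => Module.End.eigenspace M (q ^ ((d : ℤ) - 2 * (i.1 : ℤ)))) ∧
    ∀ i : Fin (d + 1), Module.End.eigenspace M (q ^ ((d : ℤ) - 2 * (i.1 : ℤ))) ≠ ⊥ := by
  have hψ : IsNilpotent ψ := ⟨d + 1, hψnil⟩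
  have hP : IsUnit (1 - (a⁻¹ * q) • ψ) := (hψ.smul _).isUnit_one_sub
  have ha2' : a ^ 2 ≠ 1 := by simpa using ha2 0 (by omega) (by omega)
  set S := intertwiner (a⁻¹ * q) q d ψ
  have hMS : M * S = S * K := by
    rw [hM, hB, inv_sub_inv_smul_eq_inverse_mul ha ha2' q hP, mul_assoc,
      mul_intertwiner hq2 _ hψnil hKψ, ← mul_assoc, Ring.inverse_mul_cancel _ hP, one_mul]
  let e := LinearMap.GeneralLinearGroup.generalLinearEquiv 𝕂 V
    (isUnit_intertwiner (a⁻¹ * q) q d hψ).unit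
  have hE : ∀ i : Fin (d + 1),
      M.eigenspace (q ^ ((d : ℤ) - 2 * (i.1 : ℤ))) = (U i).map (e : V →ₗ[𝕂] V) := fun i => by
    rw [End.eigenspace_eq_map_of_mul_eq e hMS, End.eigenspace_eq_of_isInternal hUint
      (zpow_sub_two_mul_injective hq hq2) (fun i => hKU i i.is_le)]
  refine ⟨?_, fun i => ?_⟩
  · simpa only [hE] using hUint.map_linearEquiv e
  · rw [hE, Ne, Submodule.map_eq_bot_iff]
    exact hUne i i.is_le

theorem stmt_9
    {𝕂 : Type*} [Field 𝕂] {V : Type*} [AddCommGroup V] [Module 𝕂 V]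
    [FiniteDimensional 𝕂 V]
    (d : ℕ) (hd : 1 ≤ d) (q a : 𝕂) (hq : q ≠ 0) (ha : a ≠ 0)
    (hq2 : ∀ i : ℕ, 1 ≤ i → i ≤ d → q ^ (2 * i) ≠ 1)
    (ha2 : ∀ i : ℤ, 1 - (d : ℤ) ≤ i → i ≤ (d : ℤ) - 1 → a ^ 2 ≠ q ^ (2 * i))
    (K : Module.End 𝕂 V) (hK : IsUnit K)
    (U : ℕ → Submodule 𝕂 V)
    (hUne : ∀ i, i ≤ d → U i ≠ ⊥)
    (hUint : DirectSum.IsInternal (fun i : Fin (d + 1) => U i.1))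
    (hKU : ∀ i, i ≤ d → ∀ v ∈ U i, K v = (q ^ ((d : ℤ) - 2 * (i : ℤ))) • v)
    (ψ : Module.End 𝕂 V)
    (hψ0 : ∀ v ∈ U 0, ψ v = 0)
    (hψU : ∀ i, 1 ≤ i → i ≤ d → ∀ v ∈ U i, ψ v ∈ U (i - 1))
    (hψnil : ψ ^ (d + 1) = 0)
    (hKψ : K * ψ = q ^ 2 • (ψ * K))
    (hinv : ∀ x : 𝕂, IsUnit (1 - x • ψ))
    (B : Module.End 𝕂 V)
    (hB : B = (1 - (a * q) • ψ) * Ring.inverse (1 - (a⁻¹ * q) • ψ) * K)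
    (M : Module.End 𝕂 V)
    (hM : M = (a - a⁻¹)⁻¹ • (a • K - a⁻¹ • B))
    (hMunit : IsUnit M):
    DirectSum.IsInternal (fun i : Fin (d + 1) => Module.End.eigenspace M (q ^ ((d : ℤ) - 2 * (i.1 : ℤ)))) ∧
    ∀ i : Fin (d + 1), Module.End.eigenspace M (q ^ ((d : ℤ) - 2 * (i.1 : ℤ))) ≠ ⊥ :=
  stmt_9_general d hd q a hq ha hq2 ha2 K U hUne hUint hKU ψ hψnil hKψ B hB M hM
end

section
/- For 0 ≤ i ≤ d, the dimension of W_i equals the dimension of U_i and equals the dimension of U_i^↓. -/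
open Polynomial Finset

section Stmt11Aux

variable {𝕂 : Type*} [Field 𝕂] {V : Type*} [AddCommGroup V] [Module 𝕂 V]

/-- coefficients of the conjugating operator -/
noncomputable def stmt11T (q c : 𝕂) : ℕ → 𝕂
  | 0 => 1
  | (k+1) => (q ^ (2*(k+1)) - 1)⁻¹ *
      ∑ j ∈ (Finset.range (k+1)).attach, stmt11T q c j.1 * c ^ (k+1-j.1)
decreasing_by exact Finset.mem_range.mp j.2

lemma stmt11T_zero (q c : 𝕂) : stmt11T q c 0 = 1 := by rw [stmt11T]

lemma stmt11T_key (q c : 𝕂) (m : ℕ) (hm : 1 ≤ m) (hq : q ^ (2*m) ≠ 1) :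
    q ^ (2*m) * stmt11T q c m = ∑ j ∈ Finset.range (m+1), stmt11T q c j * c ^ (m-j) := by
  obtain ⟨k, rfl⟩ := Nat.exists_eq_add_of_le hm
  have hne : q ^ (2*(1+k)) - 1 ≠ 0 := sub_ne_zero.mpr hq
  have hdef : stmt11T q c (1+k) = (q ^ (2*(1+k)) - 1)⁻¹ *
      ∑ j ∈ Finset.range (1+k), stmt11T q c j * c ^ (1+k-j) := by
    have h1 : 1 + k = k + 1 := by omega
    rw [h1, stmt11T, Finset.sum_attach (Finset.range (k+1)) (fun j => stmt11T q c j * c ^ (k+1-j))]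
  have hS : (q ^ (2*(1+k)) - 1) * stmt11T q c (1+k)
      = ∑ j ∈ Finset.range (1+k), stmt11T q c j * c ^ (1+k-j) := by
    rw [hdef, ← mul_assoc, mul_inv_cancel₀ hne, one_mul]
  rw [Finset.sum_range_succ]
  have h0 : (1 + k) - (1+k) = 0 := by omega
  rw [h0, pow_zero, mul_one, ← hS]
  ring

lemma stmt11_coeff_polysum (f : ℕ → 𝕂) (n m : ℕ) (hm : m < n) :
    (∑ j ∈ Finset.range n, C (f j) * X ^ j).coeff m = f m := by
  rw [Polynomial.finset_sum_coeff]
  simp only [Polynomial.coeff_C_mul, Polynomial.coeff_X_pow, mul_ite, mul_one, mul_zero]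
  rw [Finset.sum_ite_eq (Finset.range n) m f]
  simp [hm]

lemma stmt11_aeval_polysum (f : ℕ → 𝕂) (n : ℕ) (ψ : Module.End 𝕂 V) :
    Polynomial.aeval ψ (∑ j ∈ Finset.range n, C (f j) * X ^ j)
      = ∑ j ∈ Finset.range n, f j • ψ ^ j := by
  rw [map_sum]
  refine Finset.sum_congr rfl fun j _ => ?_
  rw [map_mul, aeval_C, map_pow, aeval_X, ← Algebra.smul_def]

lemma stmt11_aeval_congr (d : ℕ) (ψ : Module.End 𝕂 V) (hψ : ψ ^ (d+1) = 0)
    (p r : 𝕂[X]) (h : ∀ m, m ≤ d → p.coeff m = r.coeff m) :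
    Polynomial.aeval ψ p = Polynomial.aeval ψ r := by
  have hzero : ∀ i : ℕ, d < i → (ψ : Module.End 𝕂 V) ^ i = 0 := by
    intro i hi
    have hi' : i = (d+1) + (i - (d+1)) := by omega
    rw [hi', pow_add, hψ, zero_mul]
  have hp : p.natDegree < max p.natDegree r.natDegree + 1 := by omega
  have hr : r.natDegree < max p.natDegree r.natDegree + 1 := by omega
  rw [Polynomial.aeval_eq_sum_range' hp, Polynomial.aeval_eq_sum_range' hr]
  refine Finset.sum_congr rfl fun i _ => ?_
  rcases le_or_gt i d with h' | h'
  · rw [h i h']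
  · rw [hzero i h', smul_zero, smul_zero]

lemma stmt11_geom_pair {R : Type*} [Ring R] (x : R) (n : ℕ) (hx : x ^ n = 0) :
    (1 - x) * (∑ k ∈ Finset.range n, x ^ k) = 1 ∧
    (∑ k ∈ Finset.range n, x ^ k) * (1 - x) = 1 := by
  constructor
  · have h := mul_geom_sum x n
    rw [hx] at h
    have h2 : (1 - x) * ∑ k ∈ Finset.range n, x ^ k
        = -((x - 1) * ∑ k ∈ Finset.range n, x ^ k) := by
      rw [← neg_mul, neg_sub]
    rw [h2, h]; simp
  · have h := geom_sum_mul x n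
    rw [hx] at h
    have h2 : (∑ k ∈ Finset.range n, x ^ k) * (1 - x)
        = -((∑ k ∈ Finset.range n, x ^ k) * (x - 1)) := by
      rw [← mul_neg, neg_sub]
    rw [h2, h]; simp

lemma stmt11_ringInverse_one_sub {R : Type*} [Ring R] (x : R) (n : ℕ) (hx : x ^ n = 0) :
    Ring.inverse (1 - x) = ∑ k ∈ Finset.range n, x ^ k := by
  obtain ⟨h1, h2⟩ := stmt11_geom_pair x n hx
  exact Ring.inverse_unit ⟨1 - x, ∑ k ∈ Finset.range n, x ^ k, h1, h2⟩

lemma stmt11_pow_comm (q2 : 𝕂) (A ψ : Module.End 𝕂 V) (h : A * ψ = q2 • (ψ * A)) (k : ℕ) :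
    A * ψ ^ k = q2 ^ k • (ψ ^ k * A) := by
  induction k with
  | zero => simp
  | succ n ih =>
    rw [pow_succ, ← mul_assoc, ih, smul_mul_assoc, mul_assoc, h, mul_smul_comm,
      smul_smul, ← mul_assoc, ← pow_succ, ← pow_succ]

lemma stmt11_conj_exists (d : ℕ) (q c : 𝕂)
    (hq2 : ∀ i : ℕ, 1 ≤ i → i ≤ d → q ^ (2*i) ≠ 1)
    (ψ A : Module.End 𝕂 V) (hψ : ψ ^ (d+1) = 0)
    (hA : A * ψ = q ^ 2 • (ψ * A)) :
    ∃ T : Module.End 𝕂 V, IsUnit T ∧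
      T * (Ring.inverse (1 - c • ψ) * A) = A * T := by
  set t : ℕ → 𝕂 := stmt11T q c with ht
  set P : 𝕂[X] := ∑ j ∈ Finset.range (d+1), C (t j) * X ^ j with hP
  set Q : 𝕂[X] := ∑ k ∈ Finset.range (d+1), C (c ^ k) * X ^ k with hQ
  set R : 𝕂[X] := ∑ m ∈ Finset.range (d+1), C (q ^ (2*m) * t m) * X ^ m with hR
  set T : Module.End 𝕂 V := Polynomial.aeval ψ P with hT
  have hcψ : (c • ψ) ^ (d+1) = 0 := by rw [_root_.smul_pow, hψ, smul_zero]
  have hSinv : Ring.inverse (1 - c • ψ) = Polynomial.aeval ψ Q := by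
    rw [stmt11_ringInverse_one_sub (c • ψ) (d+1) hcψ, hQ, stmt11_aeval_polysum]
    exact Finset.sum_congr rfl fun k _ => by rw [_root_.smul_pow]
  have hcoeff : ∀ m, m ≤ d → (P * Q).coeff m = R.coeff m := by
    intro m hm
    rw [Polynomial.coeff_mul, Finset.Nat.sum_antidiagonal_eq_sum_range_succ_mk,
      hR, stmt11_coeff_polysum _ _ _ (by omega)]
    have hterm : ∀ k ∈ Finset.range (m+1),
        P.coeff k * Q.coeff (m - k) = t k * c ^ (m - k) := by
      intro k hk
      have hk' : k < m + 1 := Finset.mem_range.mp hk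
      rw [hP, hQ, stmt11_coeff_polysum _ _ _ (by omega), stmt11_coeff_polysum _ _ _ (by omega)]
    rw [Finset.sum_congr rfl hterm]
    rcases Nat.eq_zero_or_pos m with h0 | h1
    · subst h0; simp [ht, stmt11T_zero]
    · exact (stmt11T_key q c m h1 (hq2 m h1 hm)).symm
  have hTS : T * Ring.inverse (1 - c • ψ) = Polynomial.aeval ψ R := by
    rw [hSinv, hT, ← map_mul]
    exact stmt11_aeval_congr d ψ hψ _ _ hcoeff
  have hRval : Polynomial.aeval ψ R = ∑ m ∈ Finset.range (d+1), (q^(2*m) * t m) • ψ ^ m := by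
    rw [hR]; exact stmt11_aeval_polysum _ _ _
  have hTval : T = ∑ j ∈ Finset.range (d+1), t j • ψ ^ j := by
    rw [hT, hP]; exact stmt11_aeval_polysum _ _ _
  have hAT : A * T = Polynomial.aeval ψ R * A := by
    rw [hTval, hRval, Finset.mul_sum, Finset.sum_mul]
    refine Finset.sum_congr rfl fun j _ => ?_
    rw [mul_smul_comm, stmt11_pow_comm (q^2) A ψ hA j, smul_smul, pow_mul,
      mul_comm (t j), smul_mul_assoc]
  have hmain : T * (Ring.inverse (1 - c • ψ) * A) = A * T := by
    rw [← mul_assoc, hTS, hAT]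
  have hTsplit : T = (∑ j ∈ Finset.range d, t (j+1) • ψ ^ (j+1)) + 1 := by
    rw [hTval, Finset.sum_range_succ']
    simp [ht, stmt11T_zero]
  have hfac : (∑ j ∈ Finset.range d, t (j+1) • ψ ^ (j+1))
      = ψ * (∑ j ∈ Finset.range d, t (j+1) • ψ ^ j) := by
    rw [Finset.mul_sum]
    exact Finset.sum_congr rfl fun j _ => by rw [mul_smul_comm, ← pow_succ']
  have hcm : Commute ψ (∑ j ∈ Finset.range d, t (j+1) • ψ ^ j) :=
    Commute.sum_right _ _ _ fun j _ => ((Commute.refl ψ).pow_right j).smul_right _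
  have hnil : IsNilpotent (∑ j ∈ Finset.range d, t (j+1) • ψ ^ (j+1)) :=
    ⟨d+1, by rw [hfac, hcm.mul_pow, hψ, zero_mul]⟩
  have hTu : IsUnit T := by
    rw [hTsplit, add_comm]
    exact hnil.isUnit_one_add
  exact ⟨T, hTu, hmain⟩

lemma stmt11_finrank_eigen_conj (A M T : Module.End 𝕂 V) (hT : IsUnit T)
    (hc : T * M = A * T) (μ : 𝕂) :
    Module.finrank 𝕂 (Module.End.eigenspace M μ)
      = Module.finrank 𝕂 (Module.End.eigenspace A μ) := by
  have hbij : Function.Bijective T := by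
    rw [← Module.End.isUnit_iff]; exact hT
  let e : V ≃ₗ[𝕂] V := LinearEquiv.ofBijective T hbij
  have hE : Module.End.eigenspace M μ
      = (Module.End.eigenspace A μ).comap (e : V →ₗ[𝕂] V) := by
    ext v
    simp only [Submodule.mem_comap, Module.End.mem_eigenspace_iff]
    have hev : (e : V →ₗ[𝕂] V) v = T v := rfl
    rw [hev]
    constructor
    · intro h
      have h1 : A (T v) = T (M v) := by
        rw [← Module.End.mul_apply, ← Module.End.mul_apply, hc]
      rw [h1, h, map_smul]
    · intro h
      apply hbij.injective
      have h1 : T (M v) = A (T v) := by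
        rw [← Module.End.mul_apply, ← Module.End.mul_apply, hc]
      rw [h1, h, map_smul]
  rw [hE, Submodule.comap_equiv_eq_map_symm, LinearEquiv.finrank_map_eq]

lemma stmt11_eigen_eq_of_internal {ι : Type*} (A : Module.End 𝕂 V) (lam : ι → 𝕂)
    (hinj : ∀ i j : ι, i ≠ j → lam i ≠ lam j)
    (Us : ι → Submodule 𝕂 V) (hint : ⨆ j, Us j = ⊤)
    (hle : ∀ j, Us j ≤ Module.End.eigenspace A (lam j)) (i : ι) :
    Module.End.eigenspace A (lam i) = Us i := by
  refine le_antisymm ?_ (hle i)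
  set E := Module.End.eigenspace A (lam i) with hEdef
  set Y : Submodule 𝕂 V := ⨆ j, ⨆ _ : j ≠ i, Us j with hY
  have htop : Us i ⊔ Y = ⊤ := by
    rw [← hint]
    refine le_antisymm ?_ (iSup_le fun j => ?_)
    · refine sup_le (le_iSup Us i) (iSup₂_le fun j _ => le_iSup Us j)
    · by_cases hj : j = i
      · subst hj; exact le_sup_left
      · exact le_trans (le_iSup₂ (f := fun j (_ : j ≠ i) => Us j) j hj) le_sup_right
  have hYle : Y ≤ ⨆ μ : 𝕂, ⨆ _ : μ ≠ lam i, Module.End.eigenspace A μ := by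
    refine iSup₂_le fun j hj => le_trans (hle j) ?_
    exact le_iSup₂ (f := fun (μ : 𝕂) (_ : μ ≠ lam i) => Module.End.eigenspace A μ)
      (lam j) (hinj j i hj)
  have hdisj : Disjoint E Y :=
    ((Module.End.eigenspaces_iSupIndep A) (lam i)).mono_right hYle
  have hmod : (Us i ⊔ Y) ⊓ E = Us i ⊔ (Y ⊓ E) := sup_inf_assoc_of_le Y (hle i)
  have hE2 : E = Us i ⊔ (Y ⊓ E) := by
    rw [← hmod, htop, top_inf_eq]
  rw [hE2, inf_comm, disjoint_iff.mp hdisj]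
  simp

end Stmt11Aux

theorem stmt_11
    {𝕂 : Type*} [Field 𝕂] {V : Type*} [AddCommGroup V] [Module 𝕂 V]
    [FiniteDimensional 𝕂 V]
    (d : ℕ) (hd : 1 ≤ d) (q a : 𝕂) (hq : q ≠ 0) (ha : a ≠ 0)
    (hq2 : ∀ i : ℕ, 1 ≤ i → i ≤ d → q ^ (2 * i) ≠ 1)
    (ha2 : ∀ i : ℤ, 1 - (d : ℤ) ≤ i → i ≤ (d : ℤ) - 1 → a ^ 2 ≠ q ^ (2 * i))
    (K : Module.End 𝕂 V) (hK : IsUnit K)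
    (U : ℕ → Submodule 𝕂 V)
    (hUne : ∀ i, i ≤ d → U i ≠ ⊥)
    (hUint : DirectSum.IsInternal (fun i : Fin (d + 1) => U i.1))
    (hKU : ∀ i, i ≤ d → ∀ v ∈ U i, K v = (q ^ ((d : ℤ) - 2 * (i : ℤ))) • v)
    (ψ : Module.End 𝕂 V)
    (hψ0 : ∀ v ∈ U 0, ψ v = 0)
    (hψU : ∀ i, 1 ≤ i → i ≤ d → ∀ v ∈ U i, ψ v ∈ U (i - 1))
    (hψnil : ψ ^ (d + 1) = 0)
    (hKψ : K * ψ = q ^ 2 • (ψ * K))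
    (hinv : ∀ x : 𝕂, IsUnit (1 - x • ψ))
    (B : Module.End 𝕂 V)
    (hB : B = (1 - (a * q) • ψ) * Ring.inverse (1 - (a⁻¹ * q) • ψ) * K)
    (M : Module.End 𝕂 V)
    (hM : M = (a - a⁻¹)⁻¹ • (a • K - a⁻¹ • B))
    (hMunit : IsUnit M)
    (Ud : ℕ → Submodule 𝕂 V)
    (hUdne : ∀ i, i ≤ d → Ud i ≠ ⊥)
    (hUdint : DirectSum.IsInternal (fun i : Fin (d + 1) => Ud i.1))
    (hBUd : ∀ i, i ≤ d → ∀ v ∈ Ud i, B v = (q ^ ((d : ℤ) - 2 * (i : ℤ))) • v)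
    (hψ0d : ∀ v ∈ Ud 0, ψ v = 0)
    (hψUd : ∀ i, 1 ≤ i → i ≤ d → ∀ v ∈ Ud i, ψ v ∈ Ud (i - 1)):
    ∀ i, i ≤ d →
      Module.finrank 𝕂 (Module.End.eigenspace M (q ^ ((d : ℤ) - 2 * (i : ℤ)))) = Module.finrank 𝕂 (U i) ∧
      Module.finrank 𝕂 (Module.End.eigenspace M (q ^ ((d : ℤ) - 2 * (i : ℤ)))) = Module.finrank 𝕂 (Ud i) := by
  -- a - a⁻¹ ≠ 0
  have hdz : (1 : ℤ) ≤ (d : ℤ) := by exact_mod_cast hd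
  have ha1 : a ^ 2 ≠ 1 := by
    have h := ha2 0 (by omega) (by omega)
    simpa using h
  have hane : a - a⁻¹ ≠ 0 := by
    intro h
    apply ha1
    have h' : a = a⁻¹ := sub_eq_zero.mp h
    calc a ^ 2 = a * a := sq a
    _ = a * a⁻¹ := by rw [← h']
    _ = 1 := mul_inv_cancel₀ ha
  -- distinctness of eigenvalues
  have key : ∀ i j : ℕ, i ≤ d → j ≤ d → i ≠ j →
      q ^ ((d:ℤ) - 2*(i:ℤ)) ≠ q ^ ((d:ℤ) - 2*(j:ℤ)) := by
    have main : ∀ i j : ℕ, i < j → j ≤ d →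
        q ^ ((d:ℤ) - 2*(i:ℤ)) ≠ q ^ ((d:ℤ) - 2*(j:ℤ)) := by
      intro i j hij hjd h
      have h1 : q ^ (((d:ℤ) - 2*(i:ℤ)) - ((d:ℤ) - 2*(j:ℤ))) = 1 := by
        rw [zpow_sub₀ hq, h, div_self (zpow_ne_zero _ hq)]
      have h2 : ((d:ℤ) - 2*(i:ℤ)) - ((d:ℤ) - 2*(j:ℤ)) = ((2*(j-i) : ℕ) : ℤ) := by
        push_cast
        omega
      rw [h2, zpow_natCast] at h1
      exact hq2 (j - i) (by omega) (by omega) h1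
    intro i j hid hjd hij
    rcases Nat.lt_or_ge i j with h | h
    · exact main i j h hjd
    · have hji : j < i := by omega
      exact fun h' => main j i hji hid h'.symm
  -- M = Ring.inverse S₁ * K
  have hS₁u : IsUnit (1 - (a⁻¹ * q) • ψ) := hinv (a⁻¹ * q)
  have hSS : (1 - (a⁻¹ * q) • ψ) * Ring.inverse (1 - (a⁻¹ * q) • ψ) = 1 :=
    Ring.mul_inverse_cancel _ hS₁u
  have hMK : M = Ring.inverse (1 - (a⁻¹ * q) • ψ) * K := by
    have e1 : a * (a⁻¹ * q) = q := by field_simp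
    have e2 : a⁻¹ * (a * q) = q := by field_simp
    have key2 : a • (1 - (a⁻¹ * q) • ψ) - a⁻¹ • (1 - (a * q) • ψ)
        = (a - a⁻¹) • (1 : Module.End 𝕂 V) := by
      rw [smul_sub, smul_sub, smul_smul, smul_smul, e1, e2, sub_smul]
      abel
    have h1 : a • K = (a • (1 - (a⁻¹ * q) • ψ)) * (Ring.inverse (1 - (a⁻¹ * q) • ψ) * K) := by
      rw [smul_mul_assoc, ← mul_assoc, hSS, one_mul]
    have h2 : a⁻¹ • ((1 - (a * q) • ψ) * Ring.inverse (1 - (a⁻¹ * q) • ψ) * K)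
        = (a⁻¹ • (1 - (a * q) • ψ)) * (Ring.inverse (1 - (a⁻¹ * q) • ψ) * K) := by
      rw [smul_mul_assoc, mul_assoc]
    rw [hM, hB, h1, h2, ← sub_mul, key2, smul_mul_assoc, one_mul, smul_smul,
      inv_mul_cancel₀ hane, one_smul]
  have hBM : B = (1 - (a * q) • ψ) * M := by rw [hB, hMK, mul_assoc]
  have hMB : M = Ring.inverse (1 - (a * q) • ψ) * B := by
    rw [hBM, ← mul_assoc, Ring.inverse_mul_cancel _ (hinv (a * q)), one_mul]
  -- commutation for B
  have hc₁ψ : ((a⁻¹ * q) • ψ) ^ (d+1) = 0 := by rw [_root_.smul_pow, hψnil, smul_zero]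
  have hgeo : Ring.inverse (1 - (a⁻¹ * q) • ψ)
      = ∑ k ∈ Finset.range (d+1), ((a⁻¹ * q) • ψ) ^ k :=
    stmt11_ringInverse_one_sub _ _ hc₁ψ
  have hcomm : Commute ψ (Ring.inverse (1 - (a⁻¹ * q) • ψ)) := by
    rw [hgeo]
    exact Commute.sum_right _ _ _ fun k _ => (((Commute.refl ψ).smul_right (a⁻¹ * q)).pow_right k)
  have hMψ : M * ψ = q ^ 2 • (ψ * M) := by
    rw [hMK, mul_assoc, hKψ, mul_smul_comm, ← mul_assoc, ← hcomm.eq, mul_assoc]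
  have hcomm₂ : Commute ψ (1 - (a * q) • ψ) :=
    (Commute.one_right ψ).sub_right ((Commute.refl ψ).smul_right (a * q))
  have hBψ : B * ψ = q ^ 2 • (ψ * B) := by
    rw [hBM, mul_assoc, hMψ, mul_smul_comm, ← mul_assoc, ← hcomm₂.eq, mul_assoc]
  -- conjugations
  obtain ⟨T₁, hT₁u, hT₁⟩ := stmt11_conj_exists d q (a⁻¹ * q) hq2 ψ K hψnil hKψ
  obtain ⟨T₂, hT₂u, hT₂⟩ := stmt11_conj_exists d q (a * q) hq2 ψ B hψnil hBψ
  have hMT₁ : T₁ * M = K * T₁ := by rw [hMK]; exact hT₁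
  have hMT₂ : T₂ * M = B * T₂ := by rw [hMB]; exact hT₂
  intro i hid
  have hrkK := stmt11_finrank_eigen_conj K M T₁ hT₁u hMT₁ (q ^ ((d:ℤ) - 2*(i:ℤ)))
  have hrkB := stmt11_finrank_eigen_conj B M T₂ hT₂u hMT₂ (q ^ ((d:ℤ) - 2*(i:ℤ)))
  have hinjf : ∀ j k : Fin (d+1), j ≠ k →
      q ^ ((d:ℤ) - 2*((j:ℕ):ℤ)) ≠ q ^ ((d:ℤ) - 2*((k:ℕ):ℤ)) := by
    intro j k hjk
    exact key j.1 k.1 (Nat.lt_succ_iff.mp j.2) (Nat.lt_succ_iff.mp k.2)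
      (fun h => hjk (Fin.ext h))
  have hEK : Module.End.eigenspace K (q ^ ((d:ℤ) - 2*(i:ℤ))) = U i := by
    have h := stmt11_eigen_eq_of_internal K
      (fun j : Fin (d+1) => q ^ ((d:ℤ) - 2*((j:ℕ):ℤ))) hinjf
      (fun j : Fin (d+1) => U j.1) hUint.submodule_iSup_eq_top
      (fun j => by
        intro v hv
        exact Module.End.mem_eigenspace_iff.mpr (hKU j.1 (Nat.lt_succ_iff.mp j.2) v hv))
      ⟨i, by omega⟩
    exact h
  have hEB : Module.End.eigenspace B (q ^ ((d:ℤ) - 2*(i:ℤ))) = Ud i := by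
    have h := stmt11_eigen_eq_of_internal B
      (fun j : Fin (d+1) => q ^ ((d:ℤ) - 2*((j:ℕ):ℤ))) hinjf
      (fun j : Fin (d+1) => Ud j.1) hUdint.submodule_iSup_eq_top
      (fun j => by
        intro v hv
        exact Module.End.mem_eigenspace_iff.mpr (hBUd j.1 (Nat.lt_succ_iff.mp j.2) v hv))
      ⟨i, by omega⟩
    exact h
  constructor
  · rw [hrkK, hEK]
  · rw [hrkB, hEB]
end

section
/- For 0 ≤ i ≤ d, the sum W_0 + W_1 + ⋯ + W_i equals the sum U_0 + U_1 + ⋯ + U_i. -/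
/-! Put `F i = U 0 + ⋯ + U (i - 1)`. As `ψ` is nilpotent and maps `F (i + 1)` into `F i`, so does
`ψ G` for `G = (1 - a⁻¹qψ)⁻¹`, and `(1 - aqψ) G = 1 + (a⁻¹q - aq) ψ G` gives `𝓜 = K + a⁻¹q ψ G K`.
Thus `𝓜 - q^(d-2i)` maps `F (i + 1)` into `F i`, and the `q^(d-2i)` are pairwise distinct.
An eigenvector for `q^(d-2j)` therefore lies in `F (j + 1)`: for `k > j`, `𝓜 - q^(d-2k)` acts on it
as a nonzero scalar and pushes it from `F (k + 1)` into `F k`. Conversely, by induction on `i`,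
`𝓜 - q^(d-2i)` sends `v ∈ F (i + 1)` into `F i = W_0 + ⋯ + W_(i-1)`, on which it is invertible,
so `v` is a vector of that sum plus an eigenvector for `q^(d-2i)`. -/

open Finset

theorem Submodule.finset_sum_le_iff {R M ι : Type*} [Semiring R] [AddCommMonoid M] [Module R M]
    (s : Finset ι) (p : ι → Submodule R M) (N : Submodule R M) :
    ∑ i ∈ s, p i ≤ N ↔ ∀ i ∈ s, p i ≤ N := by
  induction s using Finset.cons_induction with
  | empty => simp
  | cons i s hi ih => simp [Submodule.add_eq_sup, ih]

theorem Ring.inverse_one_sub_eq_geom_sum {R : Type*} [Ring R] {x : R} {n : ℕ} (hx : x ^ n = 0) :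
    Ring.inverse (1 - x) = ∑ i ∈ range n, x ^ i := by
  have hunit : IsUnit (1 - x) := IsNilpotent.isUnit_one_sub ⟨n, hx⟩
  simpa using (Ring.inverse_mul_eq_iff_eq_mul _ 1 _ hunit).mpr
    (by rw [mul_neg_geom_sum, hx, sub_zero])

theorem Submodule.le_comap_ringInverse_one_sub {R M : Type*} [Ring R] [AddCommGroup M]
    [Module R M] {p : Submodule R M} {T : Module.End R M} {n : ℕ} (hT : T ^ n = 0)
    (hp : p ≤ p.comap T) : p ≤ p.comap (Ring.inverse (1 - T)) := by
  intro v hv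
  rw [Submodule.mem_comap, Ring.inverse_one_sub_eq_geom_sum hT, LinearMap.sum_apply]
  exact p.sum_mem fun k _ => p.le_comap_pow_of_le_comap hp k hv

namespace Module.End

variable {𝕜 V : Type*} [Field 𝕜] [AddCommGroup V] [Module 𝕜 V] {f : Module.End 𝕜 V}
  {μ : ℕ → 𝕜}

theorem eigenspace_le_map_sub_smul {r c : 𝕜} (h : r ≠ c) :
    f.eigenspace r ≤ (f.eigenspace r).map (f - c • 1) := by
  intro v hv
  refine ⟨(r - c)⁻¹ • v, Submodule.smul_mem _ _ hv, ?_⟩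
  rw [mem_eigenspace_iff] at hv
  simp [hv, smul_smul, ← sub_smul, inv_mul_cancel₀ (sub_ne_zero.mpr h)]

theorem sum_eigenspace_le_map_sub_smul (s : Finset ℕ) {c : 𝕜} (hc : ∀ j ∈ s, μ j ≠ c) :
    ∑ j ∈ s, f.eigenspace (μ j) ≤ (∑ j ∈ s, f.eigenspace (μ j)).map (f - c • 1) :=
  (Submodule.finset_sum_le_iff _ _ _).mpr fun j hj =>
    (eigenspace_le_map_sub_smul (hc j hj)).trans
      (Submodule.map_mono (single_le_sum_of_canonicallyOrdered (f := fun j => f.eigenspace (μ j)) hj))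

theorem eigenspace_le_of_flag {F : ℕ → Submodule 𝕜 V} {n : ℕ} (hμ : Set.InjOn μ (Set.Iic n))
    (hstep : ∀ i ≤ n, F (i + 1) ≤ (F i).comap (f - μ i • 1)) (htop : F (n + 1) = ⊤)
    {j : ℕ} (hj : j ≤ n) : f.eigenspace (μ j) ≤ F (j + 1) := by
  intro v hv
  rw [mem_eigenspace_iff] at hv
  refine Nat.decreasingInduction (motive := fun k _ => j < k → v ∈ F k) (fun k hk ih hjk => ?_)
    (fun _ => htop ▸ Submodule.mem_top) (Nat.succ_le_succ hj) (Nat.lt_succ_self j)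
  have hne : μ j - μ k ≠ 0 :=
    sub_ne_zero.mpr fun h => hjk.ne (hμ (Set.mem_Iic.mpr hj) (Set.mem_Iic.mpr (by omega)) h)
  have hmem : (μ j - μ k) • v ∈ F k := by
    simpa [hv, sub_smul] using hstep k (by omega) (ih (by omega))
  exact (Submodule.smul_mem_iff _ hne).mp hmem

theorem le_sum_eigenspace_of_flag {F : ℕ → Submodule 𝕜 V} {n : ℕ}
    (hμ : Set.InjOn μ (Set.Iic n)) (hstep : ∀ i ≤ n, F (i + 1) ≤ (F i).comap (f - μ i • 1))
    (hbot : F 0 = ⊥) {i : ℕ} (hi : i ≤ n + 1) : F i ≤ ∑ j ∈ range i, f.eigenspace (μ j) := by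
  induction i with
  | zero => simp [hbot]
  | succ i ih =>
    intro v hv
    set W := ∑ j ∈ range i, f.eigenspace (μ j)
    have hW : W ≤ W.map (f - μ i • 1) := sum_eigenspace_le_map_sub_smul _ fun j hj h =>
      (mem_range.mp hj).ne (hμ (Set.mem_Iic.mpr (by simp at hj; omega))
        (Set.mem_Iic.mpr (by omega)) h)
    obtain ⟨u, hu, hfu⟩ := hW (ih (by omega) (hstep i (by omega) hv))
    have hvu : v - u ∈ f.eigenspace (μ i) := by
      rw [eigenspace_def, LinearMap.mem_ker, map_sub, hfu, sub_self]
    rw [sum_range_succ, ← add_sub_cancel u v]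
    exact Submodule.add_mem_sup hu hvu

theorem sum_eigenspace_eq_of_flag {F : ℕ → Submodule 𝕜 V} {n : ℕ}
    (hμ : Set.InjOn μ (Set.Iic n)) (hstep : ∀ i ≤ n, F (i + 1) ≤ (F i).comap (f - μ i • 1))
    (hmono : Monotone F) (hbot : F 0 = ⊥) (htop : F (n + 1) = ⊤) {i : ℕ} (hi : i ≤ n) :
    ∑ j ∈ range (i + 1), f.eigenspace (μ j) = F (i + 1) := by
  refine le_antisymm ((Submodule.finset_sum_le_iff _ _ _).mpr fun j hj => ?_)
    (le_sum_eigenspace_of_flag hμ hstep hbot (by omega))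
  have hj : j ≤ i := mem_range_succ_iff.mp hj
  exact (eigenspace_le_of_flag hμ hstep htop (hj.trans hi)).trans (hmono (by omega))

end Module.End

section Graded

variable {𝕜 V : Type*} [Field 𝕜] [AddCommGroup V] [Module 𝕜 V] {U : ℕ → Submodule 𝕜 V}

theorem sum_range_succ_le_comap_sub_smul {T : Module.End 𝕜 V} {μ : ℕ → 𝕜} {i : ℕ}
    (hT : ∀ j ≤ i, ∀ v ∈ U j, T v = μ j • v) :
    ∑ j ∈ range (i + 1), U j ≤ (∑ j ∈ range i, U j).comap (T - μ i • 1) := by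
  refine (Submodule.finset_sum_le_iff _ _ _).mpr fun j hj v hv => ?_
  have hji : j ≤ i := mem_range_succ_iff.mp hj
  have hTv : (T - μ i • 1) v = (μ j - μ i) • v := by simp [hT j hji v hv, sub_smul]
  rw [Submodule.mem_comap, hTv]
  rcases hji.lt_or_eq with hji | rfl
  · exact Submodule.smul_mem _ _
      (single_le_sum_of_canonicallyOrdered (f := U) (mem_range.mpr hji) hv)
  · simp

theorem sum_range_succ_le_comap_of_lowering {ψ : Module.End 𝕜 V} {n : ℕ}
    (h0 : ∀ v ∈ U 0, ψ v = 0) (h : ∀ i, 1 ≤ i → i ≤ n → ∀ v ∈ U i, ψ v ∈ U (i - 1))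
    {i : ℕ} (hi : i ≤ n) : ∑ j ∈ range (i + 1), U j ≤ (∑ j ∈ range i, U j).comap ψ := by
  refine (Submodule.finset_sum_le_iff _ _ _).mpr fun j hj v hv => ?_
  have hji : j ≤ i := mem_range_succ_iff.mp hj
  rcases j with _ | j
  · simp [Submodule.mem_comap, h0 v hv]
  · exact single_le_sum_of_canonicallyOrdered (f := U) (mem_range.mpr hji)
      (h (j + 1) (by omega) (by omega) v hv)

theorem sum_range_succ_le_comap_add_smul_mul_sub_smul {K ψ : Module.End 𝕜 V} {μ : ℕ → 𝕜}
    {n : ℕ} (hK : ∀ j ≤ n, ∀ v ∈ U j, K v = μ j • v)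
    (hψ : ∀ i ≤ n, ∑ j ∈ range (i + 1), U j ≤ (∑ j ∈ range i, U j).comap ψ)
    (hnil : ψ ^ (n + 1) = 0) (s y : 𝕜) {i : ℕ} (hi : i ≤ n) :
    ∑ j ∈ range (i + 1), U j ≤
      (∑ j ∈ range i, U j).comap (K + s • (ψ * Ring.inverse (1 - y • ψ) * K) - μ i • 1) := by
  intro v hv
  have hle : ∑ j ∈ range i, U j ≤ ∑ j ∈ range (i + 1), U j :=
    sum_le_sum_of_subset (range_subset_range.mpr i.le_succ)
  have hdiag := sum_range_succ_le_comap_sub_smul (T := K) fun j hj => hK j (hj.trans hi)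
  have hKv : K v ∈ ∑ j ∈ range (i + 1), U j := by
    simpa using Submodule.add_mem _ (hle (hdiag hv)) (Submodule.smul_mem _ (μ i) hv)
  have hyψ : ∑ j ∈ range (i + 1), U j ≤ (∑ j ∈ range (i + 1), U j).comap (y • ψ) :=
    fun w hw => Submodule.smul_mem _ y (hle (hψ i hi hw))
  have hGKv :=
    Submodule.le_comap_ringInverse_one_sub (by rw [smul_pow, hnil, smul_zero]) hyψ hKv
  have hsplit : (K + s • (ψ * Ring.inverse (1 - y • ψ) * K) - μ i • 1) v
      = (K - μ i • 1) v + s • ψ (Ring.inverse (1 - y • ψ) (K v)) := by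
    simp only [LinearMap.sub_apply, LinearMap.add_apply, LinearMap.smul_apply,
      Module.End.mul_apply]
    abel
  rw [Submodule.mem_comap, hsplit]
  exact Submodule.add_mem _ (hdiag hv) (Submodule.smul_mem _ s (hψ i hi hGKv))

end Graded

theorem zpow_sub_two_mul_injOn {𝕜 : Type*} [Field 𝕜] {q : 𝕜} (hq : q ≠ 0) {d : ℕ}
    (hq2 : ∀ i : ℕ, 1 ≤ i → i ≤ d → q ^ (2 * i) ≠ 1) :
    Set.InjOn (fun j : ℕ => q ^ ((d : ℤ) - 2 * (j : ℤ))) (Set.Iic d) := by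
  have hne : ∀ j k : ℕ, j < k → k ≤ d →
      q ^ ((d : ℤ) - 2 * (j : ℤ)) ≠ q ^ ((d : ℤ) - 2 * (k : ℤ)) := by
    intro j k hjk hk h
    have hsplit : q ^ ((d : ℤ) - 2 * (j : ℤ))
        = q ^ ((d : ℤ) - 2 * (k : ℤ)) * q ^ (2 * (k - j)) := by
      rw [← zpow_natCast, ← zpow_add₀ hq]
      congr 1
      push_cast [hjk.le]
      ring
    rw [h, eq_comm, mul_eq_left₀ (zpow_ne_zero _ hq)] at hsplit
    exact hq2 (k - j) (by omega) (by omega) hsplit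
  intro j hj k hk h
  rcases lt_trichotomy j k with hjk | rfl | hjk
  · exact absurd h (hne j k hjk hk)
  · rfl
  · exact absurd h.symm (hne k j hjk hj)

theorem inv_sub_smul_sub_eq_add {𝕜 A : Type*} [Field 𝕜] [Ring A] [Algebra 𝕜 A] {a q : 𝕜}
    (ha : a - a⁻¹ ≠ 0) {ψ G K : A} (hG : (1 - (a⁻¹ * q) • ψ) * G = 1) :
    (a - a⁻¹)⁻¹ • (a • K - a⁻¹ • ((1 - (a * q) • ψ) * G * K))
      = K + (a⁻¹ * q) • (ψ * G * K) := by
  have hB : (1 - (a * q) • ψ) * G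
      = (1 - (a⁻¹ * q) • ψ) * G + (a⁻¹ * q - a * q) • (ψ * G) := by
    simp only [sub_mul, one_mul, smul_mul_assoc]
    module
  rw [hG] at hB
  rw [hB, add_mul, one_mul, smul_mul_assoc]
  have hc : (a - a⁻¹)⁻¹ * (a - a⁻¹) = 1 := inv_mul_cancel₀ ha
  match_scalars
  · linear_combination hc
  · linear_combination (a⁻¹ * q) * hc

theorem stmt_12_general
    {𝕂 : Type*} [Field 𝕂] {V : Type*} [AddCommGroup V] [Module 𝕂 V]
    (d : ℕ) (hd : 1 ≤ d) (q a : 𝕂) (hq : q ≠ 0) (ha : a ≠ 0)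
    (hq2 : ∀ i : ℕ, 1 ≤ i → i ≤ d → q ^ (2 * i) ≠ 1)
    (ha2 : ∀ i : ℤ, 1 - (d : ℤ) ≤ i → i ≤ (d : ℤ) - 1 → a ^ 2 ≠ q ^ (2 * i))
    (K : Module.End 𝕂 V)
    (U : ℕ → Submodule 𝕂 V)
    (hUint : DirectSum.IsInternal (fun i : Fin (d + 1) => U i.1))
    (hKU : ∀ i, i ≤ d → ∀ v ∈ U i, K v = (q ^ ((d : ℤ) - 2 * (i : ℤ))) • v)
    (ψ : Module.End 𝕂 V)
    (hψ0 : ∀ v ∈ U 0, ψ v = 0)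
    (hψU : ∀ i, 1 ≤ i → i ≤ d → ∀ v ∈ U i, ψ v ∈ U (i - 1))
    (hψnil : ψ ^ (d + 1) = 0)
    (B : Module.End 𝕂 V)
    (hB : B = (1 - (a * q) • ψ) * Ring.inverse (1 - (a⁻¹ * q) • ψ) * K)
    (M : Module.End 𝕂 V)
    (hM : M = (a - a⁻¹)⁻¹ • (a • K - a⁻¹ • B)) :
    ∀ i, i ≤ d →
      (∑ j ∈ Finset.range (i + 1), Module.End.eigenspace M (q ^ ((d : ℤ) - 2 * (j : ℤ))))
        = ∑ j ∈ Finset.range (i + 1), U j := by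
  intro i hi
  have ha1 : a - a⁻¹ ≠ 0 := by
    intro h
    refine ha2 0 (by omega) (by omega) ?_
    rw [sub_eq_zero] at h
    rw [mul_zero, zpow_zero, sq, ← mul_inv_cancel₀ ha, ← h]
  have hG : (1 - (a⁻¹ * q) • ψ) * Ring.inverse (1 - (a⁻¹ * q) • ψ) = 1 :=
    Ring.mul_inverse_cancel _
      (IsNilpotent.isUnit_one_sub ⟨d + 1, by rw [smul_pow, hψnil, smul_zero]⟩)
  have hMK : M = K + (a⁻¹ * q) • (ψ * Ring.inverse (1 - (a⁻¹ * q) • ψ) * K) := by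
    rw [hM, hB, inv_sub_smul_sub_eq_add ha1 hG]
  have htop : ∑ j ∈ range (d + 1), U j = ⊤ := eq_top_iff.mpr <| hUint.submodule_iSup_eq_top ▸
    iSup_le fun j => single_le_sum_of_canonicallyOrdered (f := U) (mem_range.mpr j.2)
  refine Module.End.sum_eigenspace_eq_of_flag (F := fun i => ∑ j ∈ range i, U j)
    (zpow_sub_two_mul_injOn hq hq2) (fun j hj => ?_)
    (fun m n h => sum_le_sum_of_subset (range_subset_range.mpr h)) (by simp) htop hi
  rw [hMK]
  exact sum_range_succ_le_comap_add_smul_mul_sub_smul hKU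
    (fun _ => sum_range_succ_le_comap_of_lowering hψ0 hψU) hψnil _ _ hj

theorem stmt_12
    {𝕂 : Type*} [Field 𝕂] {V : Type*} [AddCommGroup V] [Module 𝕂 V]
    [FiniteDimensional 𝕂 V]
    (d : ℕ) (hd : 1 ≤ d) (q a : 𝕂) (hq : q ≠ 0) (ha : a ≠ 0)
    (hq2 : ∀ i : ℕ, 1 ≤ i → i ≤ d → q ^ (2 * i) ≠ 1)
    (ha2 : ∀ i : ℤ, 1 - (d : ℤ) ≤ i → i ≤ (d : ℤ) - 1 → a ^ 2 ≠ q ^ (2 * i))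
    (K : Module.End 𝕂 V) (hK : IsUnit K)
    (U : ℕ → Submodule 𝕂 V)
    (hUne : ∀ i, i ≤ d → U i ≠ ⊥)
    (hUint : DirectSum.IsInternal (fun i : Fin (d + 1) => U i.1))
    (hKU : ∀ i, i ≤ d → ∀ v ∈ U i, K v = (q ^ ((d : ℤ) - 2 * (i : ℤ))) • v)
    (ψ : Module.End 𝕂 V)
    (hψ0 : ∀ v ∈ U 0, ψ v = 0)
    (hψU : ∀ i, 1 ≤ i → i ≤ d → ∀ v ∈ U i, ψ v ∈ U (i - 1))
    (hψnil : ψ ^ (d + 1) = 0)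
    (hKψ : K * ψ = q ^ 2 • (ψ * K))
    (hinv : ∀ x : 𝕂, IsUnit (1 - x • ψ))
    (B : Module.End 𝕂 V)
    (hB : B = (1 - (a * q) • ψ) * Ring.inverse (1 - (a⁻¹ * q) • ψ) * K)
    (M : Module.End 𝕂 V)
    (hM : M = (a - a⁻¹)⁻¹ • (a • K - a⁻¹ • B))
    (hMunit : IsUnit M):
    ∀ i, i ≤ d →
      (∑ j ∈ Finset.range (i + 1), Module.End.eigenspace M (q ^ ((d : ℤ) - 2 * (j : ℤ))))
        = ∑ j ∈ Finset.range (i + 1), U j :=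
  stmt_12_general d hd q a hq ha hq2 ha2 K U hUint hKU ψ hψ0 hψU hψnil B hB M hM
end

section
/- For 0 ≤ i ≤ d, both (K − q^{d−2i}I)W_i ⊆ W_{i−1} and (B − q^{d−2i}I)W_i ⊆ W_{i−1}. -/
/-- The flag `F j = U 0 ⊔ U 1 ⊔ ⋯ ⊔ U j`. -/
def stmtFlag {𝕂 : Type*} [Field 𝕂] {V : Type*} [AddCommGroup V] [Module 𝕂 V]
    (U : ℕ → Submodule 𝕂 V) : ℕ → Submodule 𝕂 V
  | 0 => U 0
  | (j+1) => stmtFlag U j ⊔ U (j+1)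

/-- The product `(M - lam 0 • 1) * ⋯ * (M - lam j • 1)` (with the factor for `0` leftmost
applied last). -/
def stmtT {𝕂 : Type*} [Field 𝕂] {V : Type*} [AddCommGroup V] [Module 𝕂 V]
    (M : Module.End 𝕂 V) (lam : ℕ → 𝕂) : ℕ → Module.End 𝕂 V
  | 0 => M - lam 0 • 1
  | (j+1) => stmtT M lam j * (M - lam (j+1) • 1)

theorem stmt_14
    {𝕂 : Type*} [Field 𝕂] {V : Type*} [AddCommGroup V] [Module 𝕂 V]
    [FiniteDimensional 𝕂 V]
    (d : ℕ) (hd : 1 ≤ d) (q a : 𝕂) (hq : q ≠ 0) (ha : a ≠ 0)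
    (hq2 : ∀ i : ℕ, 1 ≤ i → i ≤ d → q ^ (2 * i) ≠ 1)
    (ha2 : ∀ i : ℤ, 1 - (d : ℤ) ≤ i → i ≤ (d : ℤ) - 1 → a ^ 2 ≠ q ^ (2 * i))
    (K : Module.End 𝕂 V) (hK : IsUnit K)
    (U : ℕ → Submodule 𝕂 V)
    (hUne : ∀ i, i ≤ d → U i ≠ ⊥)
    (hUint : DirectSum.IsInternal (fun i : Fin (d + 1) => U i.1))
    (hKU : ∀ i, i ≤ d → ∀ v ∈ U i, K v = (q ^ ((d : ℤ) - 2 * (i : ℤ))) • v)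
    (ψ : Module.End 𝕂 V)
    (hψ0 : ∀ v ∈ U 0, ψ v = 0)
    (hψU : ∀ i, 1 ≤ i → i ≤ d → ∀ v ∈ U i, ψ v ∈ U (i - 1))
    (hψnil : ψ ^ (d + 1) = 0)
    (hKψ : K * ψ = q ^ 2 • (ψ * K))
    (hinv : ∀ x : 𝕂, IsUnit (1 - x • ψ))
    (B : Module.End 𝕂 V)
    (hB : B = (1 - (a * q) • ψ) * Ring.inverse (1 - (a⁻¹ * q) • ψ) * K)
    (M : Module.End 𝕂 V)
    (hM : M = (a - a⁻¹)⁻¹ • (a • K - a⁻¹ • B))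
    (hMunit : IsUnit M):
    ∀ i, i ≤ d →
      Submodule.map (K - (q ^ ((d : ℤ) - 2 * (i : ℤ))) • 1) (Module.End.eigenspace M (q ^ ((d : ℤ) - 2 * (i : ℤ))))
        ≤ (if i = 0 then ⊥ else Module.End.eigenspace M (q ^ ((d : ℤ) - 2 * ((i - 1) : ℤ)))) ∧
      Submodule.map (B - (q ^ ((d : ℤ) - 2 * (i : ℤ))) • 1) (Module.End.eigenspace M (q ^ ((d : ℤ) - 2 * (i : ℤ))))
        ≤ (if i = 0 then ⊥ else Module.End.eigenspace M (q ^ ((d : ℤ) - 2 * ((i - 1) : ℤ)))) := by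
  classical
  have ha1 : a ^ 2 ≠ 1 := by
    have h := ha2 0 (by omega) (by omega)
    simpa using h
  have haa : a - a⁻¹ ≠ 0 := by
    intro h
    apply ha1
    have h2 : a = a⁻¹ := by rwa [sub_eq_zero] at h
    have : a ^ 2 = a * a⁻¹ := by rw [sq]; nth_rewrite 2 [h2]; rfl
    rw [this, mul_inv_cancel₀ ha]
  set c : 𝕂 := a⁻¹ * q with hc
  set c' : 𝕂 := a * q with hc'
  set G : Module.End 𝕂 V := ∑ k ∈ Finset.range (d+1), (c • ψ) ^ k with hG
  have hnil : (c • ψ) ^ (d+1) = 0 := by rw [smul_pow, hψnil, smul_zero]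
  have hGP : G * (1 - c • ψ) = 1 := by
    have h1 : G * ((c • ψ) - 1) = (c • ψ) ^ (d+1) - 1 := geom_sum_mul _ _
    rw [hnil] at h1
    have h2 : G * (1 - c • ψ) = -(G * ((c • ψ) - 1)) := by noncomm_ring
    rw [h2, h1]; simp
  have hPG : (1 - c • ψ) * G = 1 := by
    have h1 : ((c • ψ) - 1) * G = (c • ψ) ^ (d+1) - 1 := mul_geom_sum _ _
    rw [hnil] at h1
    have h2 : (1 - c • ψ) * G = -(((c • ψ) - 1) * G) := by noncomm_ring
    rw [h2, h1]; simp
  have hiP : Ring.inverse (1 - c • ψ) = G := by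
    obtain ⟨u, hu⟩ := hinv c
    rw [← hu, Ring.inverse_unit]
    exact Units.inv_eq_of_mul_eq_one_right (by rw [hu]; exact hPG)
  have hBGK : B = (1 - c' • ψ) * (G * K) := by rw [hB, hiP, mul_assoc]
  have hMGK : M = G * K := by
    have hK1 : K = (1 - c • ψ) * (G * K) := by rw [← mul_assoc, hPG, one_mul]
    have e0 : (a • (1 - c • ψ) - a⁻¹ • (1 - c' • ψ)) = (a - a⁻¹) • (1 : Module.End 𝕂 V) := by
      rw [smul_sub, smul_sub, smul_smul, smul_smul, hc, hc', sub_smul]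
      have e1 : a * (a⁻¹ * q) = q := by field_simp
      have e2 : a⁻¹ * (a * q) = q := by field_simp
      rw [e1, e2]
      abel
    have e3 : a • K - a⁻¹ • B = (a - a⁻¹) • (G * K) := by
      rw [hBGK]
      calc a • K - a⁻¹ • ((1 - c' • ψ) * (G * K))
          = a • ((1 - c • ψ) * (G * K)) - a⁻¹ • ((1 - c' • ψ) * (G * K)) := by rw [← hK1]
        _ = (a • (1 - c • ψ)) * (G * K) - (a⁻¹ • (1 - c' • ψ)) * (G * K) := by
            rw [smul_mul_assoc, smul_mul_assoc]
        _ = (a • (1 - c • ψ) - a⁻¹ • (1 - c' • ψ)) * (G * K) := (sub_mul _ _ _).symm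
        _ = ((a - a⁻¹) • (1 : Module.End 𝕂 V)) * (G * K) := by rw [e0]
        _ = (a - a⁻¹) • (G * K) := by rw [smul_mul_assoc, one_mul]
    rw [hM, e3, smul_smul, inv_mul_cancel₀ haa, one_smul]
  have hKPM : K = (1 - c • ψ) * M := by rw [hMGK, ← mul_assoc, hPG, one_mul]
  have hBPM : B = (1 - c' • ψ) * M := by rw [hBGK, hMGK]
  have hψGc : ψ * G = G * ψ := by
    rw [hG, Finset.mul_sum, Finset.sum_mul]
    refine Finset.sum_congr rfl fun k _ => ?_
    exact (((Commute.refl ψ).smul_right c).pow_right k).eq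
  have hMψ : M * ψ = (q ^ 2) • (ψ * M) := by
    rw [hMGK, mul_assoc, hKψ, mul_smul_comm, ← mul_assoc, ← hψGc, mul_assoc]
  have hMψv : ∀ v : V, M (ψ v) = (q ^ 2) • ψ (M v) := by
    intro v
    have h := LinearMap.congr_fun hMψ v
    simpa [Module.End.mul_apply, LinearMap.smul_apply] using h
  set lam : ℕ → 𝕂 := fun i : ℕ => q ^ ((d : ℤ) - 2 * (i : ℤ)) with hlamdef
  -- flag lemmas
  have hFle : ∀ j k : ℕ, j ≤ k → stmtFlag U j ≤ stmtFlag U k := by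
    intro j k hjk
    induction k with
    | zero => have : j = 0 := by omega
              subst this; exact le_rfl
    | succ k ih =>
      rcases Nat.eq_or_lt_of_le hjk with h | h
      · subst h; exact le_rfl
      · exact (ih (by omega)).trans le_sup_left
  have hUleF : ∀ j k : ℕ, k ≤ j → U k ≤ stmtFlag U j := by
    intro j
    induction j with
    | zero => intro k hk; have : k = 0 := by omega
              subst this; exact le_rfl
    | succ j ih =>
      intro k hk
      rcases Nat.eq_or_lt_of_le hk with h | h
      · subst h; exact le_sup_right
      · exact (ih k (by omega)).trans le_sup_left
  have hψF : ∀ j, j ≤ d → ∀ v ∈ stmtFlag U j, ψ v ∈ stmtFlag U (j - 1) := by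
    intro j
    induction j with
    | zero =>
      intro _ v hv
      rw [hψ0 v hv]
      exact Submodule.zero_mem _
    | succ j ih =>
      intro hj v hv
      obtain ⟨x, hx, y, hy, rfl⟩ := Submodule.mem_sup.mp hv
      rw [map_add]
      apply Submodule.add_mem
      · exact hFle _ _ (by omega) (ih (by omega) x hx)
      · exact hUleF j j le_rfl (hψU (j+1) (by omega) hj y hy)
  have hψFself : ∀ j, j ≤ d → ∀ v ∈ stmtFlag U j, ψ v ∈ stmtFlag U j :=
    fun j hj v hv => hFle _ _ (Nat.sub_le j 1) (hψF j hj v hv)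
  have hψkF : ∀ j, j ≤ d → ∀ (k : ℕ), ∀ v ∈ stmtFlag U j, (ψ ^ k) v ∈ stmtFlag U j := by
    intro j hj k
    induction k with
    | zero => intro v hv; simpa using hv
    | succ k ih =>
      intro v hv
      rw [pow_succ, Module.End.mul_apply]
      exact ih _ (hψFself j hj v hv)
  have hGF : ∀ j, j ≤ d → ∀ v ∈ stmtFlag U j, G v ∈ stmtFlag U j := by
    intro j hj v hv
    rw [hG, LinearMap.sum_apply]
    apply Submodule.sum_mem
    intro k _
    rw [smul_pow, LinearMap.smul_apply]
    exact Submodule.smul_mem _ _ (hψkF j hj k v hv)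
  have hKF : ∀ j, j ≤ d → ∀ v ∈ stmtFlag U j, K v ∈ stmtFlag U j := by
    intro j
    induction j with
    | zero =>
      intro hj v hv
      rw [hKU 0 (by omega) v hv]
      exact Submodule.smul_mem _ _ hv
    | succ j ih =>
      intro hj v hv
      obtain ⟨x, hx, y, hy, rfl⟩ := Submodule.mem_sup.mp hv
      rw [map_add]
      apply Submodule.add_mem
      · exact (hFle j (j+1) (by omega)) (ih (by omega) x hx)
      · rw [hKU (j+1) hj y hy]
        exact Submodule.smul_mem _ _ (Submodule.mem_sup_right hy)
  have hMF : ∀ j, j ≤ d → ∀ v ∈ stmtFlag U j, M v ∈ stmtFlag U j := by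
    intro j hj v hv
    rw [hMGK, Module.End.mul_apply]
    exact hGF j hj _ (hKF j hj v hv)
  have hGsplit : ∀ v : V, G v = (∑ k ∈ Finset.range d, ((c • ψ) ^ (k+1)) v) + v := by
    intro v
    rw [hG, LinearMap.sum_apply, Finset.sum_range_succ']
    simp
  have hterm : ∀ (k : ℕ) (v : V), ((c • ψ) ^ (k+1)) v = c ^ (k+1) • (ψ ^ k) (ψ v) := by
    intro k v
    rw [smul_pow, LinearMap.smul_apply, pow_succ ψ k, Module.End.mul_apply]
  have hMU0 : ∀ v ∈ U 0, M v = lam 0 • v := by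
    intro v hv
    rw [hMGK, Module.End.mul_apply, hKU 0 (by omega) v hv, map_smul, hGsplit]
    have h0 : ∀ k ∈ Finset.range d, ((c • ψ) ^ (k+1)) v = 0 := by
      intro k _
      rw [hterm, hψ0 v hv, map_zero, smul_zero]
    rw [Finset.sum_congr rfl h0, Finset.sum_const_zero, zero_add]
  have hMUj : ∀ j, 1 ≤ j → j ≤ d → ∀ v ∈ U j,
      M v - lam j • v ∈ stmtFlag U (j - 1) := by
    intro j h1 hj v hv
    rw [hMGK, Module.End.mul_apply, hKU j hj v hv, map_smul, hGsplit, smul_add]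
    have hlamj : (q ^ ((d : ℤ) - 2 * (j : ℤ))) = lam j := rfl
    rw [hlamj, add_sub_cancel_right]
    apply Submodule.smul_mem
    apply Submodule.sum_mem
    intro k _
    rw [hterm]
    apply Submodule.smul_mem
    exact hψkF (j-1) (by omega) k _ (hUleF (j-1) (j-1) le_rfl (hψU j h1 hj v hv))
  have hstep : ∀ j, 1 ≤ j → j ≤ d → ∀ v ∈ stmtFlag U j,
      M v - lam j • v ∈ stmtFlag U (j - 1) := by
    intro j h1 hj v hv
    obtain ⟨j', rfl⟩ : ∃ j', j = j' + 1 := ⟨j - 1, by omega⟩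
    obtain ⟨x, hx, y, hy, rfl⟩ := Submodule.mem_sup.mp hv
    have hsplit : M (x + y) - lam (j'+1) • (x + y)
        = (M x - lam (j'+1) • x) + (M y - lam (j'+1) • y) := by
      rw [map_add, smul_add]; abel
    rw [hsplit]
    apply Submodule.add_mem
    · exact Submodule.sub_mem _ (hMF j' (by omega) x hx) (Submodule.smul_mem _ _ hx)
    · exact hMUj (j'+1) (by omega) hj y hy
  have hTzero : ∀ j, j ≤ d → ∀ v ∈ stmtFlag U j, stmtT M lam j v = 0 := by
    intro j
    induction j with
    | zero =>
      intro hj v hv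
      show (M - lam 0 • 1) v = 0
      rw [LinearMap.sub_apply, LinearMap.smul_apply, Module.End.one_apply, hMU0 v hv, sub_self]
    | succ j ih =>
      intro hj v hv
      show (stmtT M lam j * (M - lam (j+1) • 1)) v = 0
      rw [Module.End.mul_apply]
      have h2 : (M - lam (j+1) • 1) v ∈ stmtFlag U j := by
        have h3 := hstep (j+1) (by omega) hj v hv
        simpa [LinearMap.sub_apply, LinearMap.smul_apply, Module.End.one_apply] using h3
      exact ih (by omega) _ h2
  have hTeig : ∀ (μ : 𝕂) (w : V), M w = μ • w →
      ∀ j, stmtT M lam j w = (∏ k ∈ Finset.range (j+1), (μ - lam k)) • w := by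
    intro μ w hw j
    induction j with
    | zero =>
      show (M - lam 0 • 1) w = _
      rw [LinearMap.sub_apply, LinearMap.smul_apply, Module.End.one_apply, hw, ← sub_smul,
        Finset.prod_range_one]
    | succ j ih =>
      show stmtT M lam j ((M - lam (j+1) • 1) w) = _
      have h1 : (M - lam (j+1) • 1) w = (μ - lam (j+1)) • w := by
        rw [LinearMap.sub_apply, LinearMap.smul_apply, Module.End.one_apply, hw, ← sub_smul]
      rw [h1, map_smul, ih, smul_smul]
      congr 1
      conv_rhs => rw [Finset.prod_range_succ]
      ring
  have hFtop : ∀ v : V, v ∈ stmtFlag U d := by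
    have h1 : (⊤ : Submodule 𝕂 V) ≤ stmtFlag U d := by
      rw [← hUint.submodule_iSup_eq_top]
      exact iSup_le fun i => hUleF d i.1 (Nat.lt_succ_iff.mp i.2)
    exact fun v => h1 Submodule.mem_top
  have hψW0 : ∀ v : V, M v = lam 0 • v → ψ v = 0 := by
    intro v hv
    have hw : M (ψ v) = ((q ^ 2) * lam 0) • ψ v := by
      rw [hMψv, hv, map_smul, smul_smul]
    have hwF : ψ v ∈ stmtFlag U (d - 1) := hψF d le_rfl v (hFtop v)
    have h0 : stmtT M lam (d-1) (ψ v) = 0 := hTzero (d-1) (by omega) _ hwF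
    rw [hTeig _ _ hw (d-1)] at h0
    have hd1 : d - 1 + 1 = d := by omega
    rw [hd1] at h0
    rcases smul_eq_zero.mp h0 with h | h
    · exfalso
      obtain ⟨k, hk, hk0⟩ := Finset.prod_eq_zero_iff.mp h
      have hkd : k < d := Finset.mem_range.mp hk
      have hμ : (q ^ 2 : 𝕂) * lam 0 = lam k := sub_eq_zero.mp hk0
      apply hq2 (k+1) (by omega) (by omega)
      have h2 : q ^ (2 : ℕ) * q ^ ((d : ℤ)) = q ^ ((d : ℤ) - 2 * (k : ℤ)) := by
        simpa [hlamdef] using hμ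
      have h2' : q ^ ((2 : ℤ) + (d : ℤ)) = q ^ ((d : ℤ) - 2 * (k : ℤ)) := by
        rw [zpow_add₀ hq]
        exact_mod_cast h2
      have h3 : q ^ ((2 : ℤ) + (d : ℤ) - ((d : ℤ) - 2 * (k : ℤ))) = 1 := by
        rw [zpow_sub₀ hq, h2', div_self (zpow_ne_zero _ hq)]
      have h4 : (2 : ℤ) + (d : ℤ) - ((d : ℤ) - 2 * (k : ℤ)) = ((2 * (k+1) : ℕ) : ℤ) := by
        push_cast; ring
      rw [h4, zpow_natCast] at h3
      exact h3
    · exact h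
  have hKv : ∀ (s : 𝕂) (v : V), M v = s • v → (K - s • 1) v = (-(c * s)) • ψ v := by
    intro s v hv
    rw [LinearMap.sub_apply, LinearMap.smul_apply, Module.End.one_apply, hKPM,
      Module.End.mul_apply, hv]
    simp only [map_smul, LinearMap.sub_apply, Module.End.one_apply, LinearMap.smul_apply]
    module
  have hBv : ∀ (s : 𝕂) (v : V), M v = s • v → (B - s • 1) v = (-(c' * s)) • ψ v := by
    intro s v hv
    rw [LinearMap.sub_apply, LinearMap.smul_apply, Module.End.one_apply, hBPM,
      Module.End.mul_apply, hv]
    simp only [map_smul, LinearMap.sub_apply, Module.End.one_apply, LinearMap.smul_apply]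
    module
  intro i hi
  rcases Nat.eq_zero_or_pos i with rfl | hpos
  · rw [if_pos rfl]
    constructor
    · intro x hx
      obtain ⟨v, hv, rfl⟩ := Submodule.mem_map.mp hx
      have hv' : M v = lam 0 • v := Module.End.mem_eigenspace_iff.mp hv
      rw [Submodule.mem_bot]
      have := hKv (lam 0) v hv'
      rw [this, hψW0 v hv', smul_zero]
    · intro x hx
      obtain ⟨v, hv, rfl⟩ := Submodule.mem_map.mp hx
      have hv' : M v = lam 0 • v := Module.End.mem_eigenspace_iff.mp hv
      rw [Submodule.mem_bot]
      have := hBv (lam 0) v hv'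
      rw [this, hψW0 v hv', smul_zero]
  · have hine : i ≠ 0 := by omega
    have hlam' : (q ^ 2 : 𝕂) * lam i = q ^ ((d : ℤ) - 2 * ((i : ℤ) - 1)) := by
      rw [hlamdef]
      rw [← zpow_natCast q 2, ← zpow_add₀ hq]
      congr 1
      push_cast
      ring
    have hmemψ : ∀ v : V, M v = lam i • v →
        ψ v ∈ Module.End.eigenspace M (q ^ ((d : ℤ) - 2 * ((i : ℤ) - 1))) := by
      intro v hv
      rw [Module.End.mem_eigenspace_iff, hMψv, hv, map_smul, smul_smul, hlam']
    constructor
    · rw [if_neg hine]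
      intro x hx
      obtain ⟨v, hv, rfl⟩ := Submodule.mem_map.mp hx
      have hv' : M v = lam i • v := Module.End.mem_eigenspace_iff.mp hv
      rw [hKv (lam i) v hv']
      exact Submodule.smul_mem _ _ (hmemψ v hv')
    · rw [if_neg hine]
      intro x hx
      obtain ⟨v, hv, rfl⟩ := Submodule.mem_map.mp hx
      have hv' : M v = lam i • v := Module.End.mem_eigenspace_iff.mp hv
      rw [hBv (lam i) v hv']
      exact Submodule.smul_mem _ _ (hmemψ v hv')
end
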